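/- arXiv:1712.07504 — 4 statements merged into one kernel-verified Lean document; each statement's English description precedes it below -/
import Mathlib

section
/- A finite graph G is factor-critical if and only if G admits an odd ear decomposition, i.e., a sequence of subgraphs G_0 ⊆ G_1 ⊆ … ⊆ G_r = G such that G_0 consists of a single vertex and, for each 0 < i ≤ r, G_i is obtained from G_{i−1} by adding an ear: a path with an odd number of edges whose two endpoints (which may coincide) lie in G_{i−1} and whose internal vertices are new. Moreover, if G is factor-critical, then for every vertex v of G there exists such a decomposition with G_0 = {v}. -/
/-!
Adding an odd ear preserves the property that every vertex can be left uncovered by a matching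
of the current subgraph: a matching missing the right endpoint (or the old vertex itself) is
completed by every other edge of the ear, which has an even number of inner vertices.

Conversely, fix a matching `M` of `G` missing `v` and grow, starting from `{v}`, subgraphs `H`
that contain the `M`-edges at their vertices. An edge of `G` between two vertices of `H` that is
not in `H` is an ear of length one. An edge `xy` leaving `H` is prolonged, using a matching `N`
missing `y`, by the walk from `y` alternating between `M`- and `N`-edges; this is a path that
returns to `H` (at the latest in `v`) after an even number of steps, so together with `xy` it is
an odd ear. If neither kind of edge exists but `H ≠ G`, a matching missing a vertex outside `H`
matches `H` perfectly while `M` matches `H - v`, which is impossible by parity.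
-/

/-- A graph is factor-critical if deleting any vertex leaves a graph with a
perfect matching. -/
def IsFactorCritical {V : Type*} (G : SimpleGraph V) : Prop :=
  ∀ v : V, ∃ M : (G.induce {w | w ≠ v}).Subgraph, M.IsPerfectMatching

/-- `H'` is obtained from the subgraph `H` by adding an ear: a path
`p 0, p 1, …, p m` in `G` with an odd number `m` of edges, whose endpoints
`p 0` and `p m` lie in `H` (and may coincide), whose internal vertices are new
and pairwise distinct, and which contributes exactly its edges to `H'`. -/
def IsEarExtension {V : Type*} {G : SimpleGraph V} (H H' : G.Subgraph) : Prop :=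
  ∃ (m : ℕ) (p : ℕ → V),
    Odd m ∧
    (∀ i < m, G.Adj (p i) (p (i + 1))) ∧
    p 0 ∈ H.verts ∧ p m ∈ H.verts ∧
    (∀ i, 0 < i → i < m → p i ∉ H.verts) ∧
    (∀ i j, 0 < i → i < j → j < m → p i ≠ p j) ∧
    ¬ H.Adj (p 0) (p 1) ∧
    H'.verts = H.verts ∪ {w | ∃ i, 0 < i ∧ i < m ∧ w = p i} ∧
    (∀ x y, H'.Adj x y ↔
      H.Adj x y ∨ ∃ i < m, (x = p i ∧ y = p (i + 1)) ∨ (y = p i ∧ x = p (i + 1)))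

/-- `G` has an odd ear decomposition with `r` ears starting from the vertex `v`:
a chain of subgraphs beginning with the single vertex `v`, each obtained from
the previous one by adding an odd ear, and ending with `G` itself. -/
def HasOddEarDecomposition {V : Type*} (G : SimpleGraph V) (r : ℕ) (v : V) : Prop :=
  ∃ H : ℕ → G.Subgraph,
    (H 0).verts = {v} ∧ (∀ x y, ¬ (H 0).Adj x y) ∧
    (∀ i < r, IsEarExtension (H i) (H (i + 1))) ∧
    H r = ⊤

open SimpleGraph Function Set

section Generic

variable {α : Type*}

theorem Relation.ReflTransGen.exists_seq {r : α → α → Prop} {a b : α}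
    (h : Relation.ReflTransGen r a b) :
    ∃ (n : ℕ) (f : ℕ → α), f 0 = a ∧ (∀ i < n, r (f i) (f (i + 1))) ∧ f n = b := by
  induction h using Relation.ReflTransGen.head_induction_on with
  | refl => exact ⟨0, fun _ => b, rfl, fun _ h => absurd h (Nat.not_lt_zero _), rfl⟩
  | head hac _ ih =>
    obtain ⟨n, f, hf0, hf, hfn⟩ := ih
    refine ⟨n + 1, fun | 0 => _ | i + 1 => f i, rfl, ?_, hfn⟩
    rintro (_ | i) hi
    · exact (hf0 ▸ hac :)
    · exact hf i (by omega)

theorem Function.Involutive.even_ncard [Finite α] {f : α → α} (hf : Involutive f) {S : Set α}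
    (hS : ∀ x ∈ S, f x ∈ S) (hfix : ∀ x ∈ S, f x ≠ x) : Even S.ncard := by
  classical
  have := Fintype.ofFinite α
  let σ : Equiv.Perm S :=
    (hf.toPerm f).subtypePerm fun x => ⟨fun h => hf x ▸ hS _ h, hS x⟩
  have hσ : σ ^ 2 = 1 := by
    ext x
    simp [σ, sq, hf _]
  have hsupp : σ.support = Finset.univ := by
    ext x
    simpa [σ, Subtype.ext_iff] using hfix x x.2
  have := Equiv.Perm.two_dvd_card_support hσ
  rwa [hsupp, Finset.card_univ, ← Nat.card_eq_fintype_card, Nat.card_coe_set_eq,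
    ← even_iff_two_dvd] at this

end Generic

section Graph

variable {V : Type*} {G : SimpleGraph V}

namespace SimpleGraph.Subgraph

theorem IsMatching.exists_involutive {M : G.Subgraph} (hM : M.IsMatching) :
    ∃ f : V → V, Involutive f ∧ (∀ x ∈ M.verts, M.Adj x (f x)) ∧
      ∀ x ∉ M.verts, f x = x := by
  classical
  let f x := if hx : x ∈ M.verts then (hM hx).exists.choose else x
  have hf : ∀ x ∈ M.verts, M.Adj x (f x) := fun x hx => by
    simpa [f, hx] using (hM hx).exists.choose_spec
  have hfx : ∀ x ∉ M.verts, f x = x := fun x hx => by simp [f, hx]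
  refine ⟨f, fun x => ?_, hf, hfx⟩
  by_cases hx : x ∈ M.verts
  · have hxy := hf x hx
    exact hM.eq_of_adj_left (hf _ (M.edge_vert hxy.symm)) hxy.symm
  · rw [hfx x hx, hfx x hx]

theorem IsMatching.exists_sup_image_Ico {K M : G.Subgraph} (hMK : M ≤ K) (hM : M.IsMatching)
    {p : ℕ → V} {a : ℕ} (n : ℕ) (hK : ∀ k < n, K.Adj (p (a + 2 * k)) (p (a + 2 * k + 1)))
    (hp : InjOn p (Ico a (a + 2 * n))) (hdisj : Disjoint M.verts (p '' Ico a (a + 2 * n))) :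
    ∃ M' ≤ K, M'.IsMatching ∧ M'.verts = M.verts ∪ p '' Ico a (a + 2 * n) := by
  induction n with
  | zero => exact ⟨M, hMK, hM, by simp⟩
  | succ n ih =>
    have hsub : Ico a (a + 2 * n) ⊆ Ico a (a + 2 * (n + 1)) := Ico_subset_Ico_right (by omega)
    obtain ⟨M', hM'K, hM', hM'v⟩ := ih (fun k hk => hK k (by omega)) (hp.mono hsub)
      (hdisj.mono_right (image_mono hsub))
    have hadj := hK n (by omega)
    refine ⟨M' ⊔ G.subgraphOfAdj (K.adj_sub hadj), sup_le hM'K (subgraphOfAdj_le_of_adj K hadj),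
      hM'.sup (.subgraphOfAdj _) ?_, ?_⟩
    · rw [hM'.support_eq_verts, (IsMatching.subgraphOfAdj _).support_eq_verts, hM'v,
        subgraphOfAdj_verts, disjoint_union_left]
      refine ⟨hdisj.mono_right ?_, Set.disjoint_left.2 ?_⟩
      · rintro _ (rfl | rfl) <;> exact mem_image_of_mem _ (by simp only [mem_Ico]; omega)
      · rintro _ ⟨i, hi, rfl⟩ (h | h) <;>
          have := hp (Ico_subset_Ico_right (by omega) hi) (by simp only [mem_Ico]; omega) h <;>
          simp only [mem_Ico] at hi <;> omega
    · ext z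
      simp only [verts_sup, hM'v, subgraphOfAdj_verts, mem_union, mem_image, mem_Ico,
        mem_insert_iff, mem_singleton_iff]
      constructor
      · rintro ((hz | ⟨i, hi, rfl⟩) | rfl | rfl)
        exacts [.inl hz, .inr ⟨i, by omega, rfl⟩, .inr ⟨_, by omega, rfl⟩,
          .inr ⟨_, by omega, rfl⟩]
      · rintro (hz | ⟨i, hi, rfl⟩)
        · exact .inl (.inl hz)
        · obtain hi' | rfl | rfl : i < a + 2 * n ∨ i = a + 2 * n ∨ i = a + 2 * n + 1 := by
            omega
          exacts [.inl (.inr ⟨i, ⟨hi.1, hi'⟩, rfl⟩), .inr (.inl rfl), .inr (.inr rfl)]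

end SimpleGraph.Subgraph

theorem isFactorCritical_iff_forall_exists_isMatching :
    IsFactorCritical G ↔ ∀ u, ∃ M : G.Subgraph, M.IsMatching ∧ M.verts = {u}ᶜ := by
  refine forall_congr' fun u => ⟨fun ⟨M, hM⟩ => ?_, fun ⟨M, hM, hMv⟩ => ?_⟩
  · let φ := Embedding.induce (G := G) {w | w ≠ u}
    refine ⟨M.map φ.toHom, hM.1.map _ φ.injective, ?_⟩
    ext w
    simp [φ, hM.2.verts_eq_univ]
  · refine ⟨M.comap (Embedding.induce {w | w ≠ u}).toHom,
      Subgraph.isPerfectMatching_iff.2 ?_⟩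
    rintro ⟨x, hx⟩
    obtain ⟨y, hxy, hy⟩ := hM (show x ∈ M.verts from hMv ▸ hx)
    have hyu : y ≠ u := by simpa [hMv] using M.edge_vert hxy.symm
    exact ⟨⟨y, hyu⟩, ⟨M.adj_sub hxy, hxy⟩, fun z hz => Subtype.ext (hy z hz.2)⟩

-- The partner map of a matching of `G` that covers every vertex except `v`.
structure IsPartnerFunction (G : SimpleGraph V) (v : V) (f : V → V) : Prop where
  involutive : Involutive f
  eq_self_iff : ∀ x, f x = x ↔ x = v
  adj : ∀ x, x ≠ v → G.Adj x (f x)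

theorem IsFactorCritical.exists_isPartnerFunction (hG : IsFactorCritical G) (v : V) :
    ∃ f, IsPartnerFunction G v f := by
  obtain ⟨M, hM, hMv⟩ := isFactorCritical_iff_forall_exists_isMatching.1 hG v
  obtain ⟨f, hf, hfM, hfix⟩ := hM.exists_involutive
  have hmem : ∀ x, x ∈ M.verts ↔ x ≠ v := by simp [hMv]
  refine ⟨f, hf, fun x => ⟨fun h => ?_, fun h => hfix x (by simp [hmem, h])⟩,
    fun x hx => M.adj_sub (hfM x ((hmem x).2 hx))⟩
  by_contra hx
  exact (hfM x ((hmem x).2 hx)).ne h.symm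

section Ears

variable {H H' : G.Subgraph} {m : ℕ} {p : ℕ → V}

structure IsOddEar (H : G.Subgraph) (m : ℕ) (p : ℕ → V) : Prop where
  odd : Odd m
  adj : ∀ i < m, G.Adj (p i) (p (i + 1))
  start_mem : p 0 ∈ H.verts
  end_mem : p m ∈ H.verts
  not_mem : ∀ i, 0 < i → i < m → p i ∉ H.verts
  ne : ∀ i j, 0 < i → i < j → j < m → p i ≠ p j

def SimpleGraph.Subgraph.addEar (H : G.Subgraph) (e : IsOddEar H m p) : G.Subgraph where
  verts := H.verts ∪ {w | ∃ i, 0 < i ∧ i < m ∧ w = p i}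
  Adj x y := H.Adj x y ∨ ∃ i < m, (x = p i ∧ y = p (i + 1)) ∨ (y = p i ∧ x = p (i + 1))
  adj_sub := by
    rintro x y (h | ⟨i, hi, ⟨rfl, rfl⟩ | ⟨rfl, rfl⟩⟩)
    exacts [H.adj_sub h, e.adj i hi, (e.adj i hi).symm]
  edge_vert := by
    rintro x y (h | ⟨i, hi, ⟨rfl, rfl⟩ | ⟨rfl, rfl⟩⟩)
    · exact .inl (H.edge_vert h)
    · rcases Nat.eq_zero_or_pos i with rfl | hi0
      exacts [.inl e.start_mem, .inr ⟨i, hi0, hi, rfl⟩]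
    · rcases (Nat.succ_le_of_lt hi).eq_or_lt with rfl | him
      exacts [.inl e.end_mem, .inr ⟨i + 1, i.succ_pos, him, rfl⟩]
  symm := ⟨fun _ _ => Or.imp (fun h => H.adj_symm h) fun ⟨i, hi, h⟩ => ⟨i, hi, h.symm⟩⟩

namespace IsOddEar

theorem mem_addEar_verts (e : IsOddEar H m p) {z : V} :
    z ∈ (H.addEar e).verts ↔ z ∈ H.verts ∨ ∃ i, 0 < i ∧ i < m ∧ z = p i :=
  Iff.rfl

theorem le_addEar (e : IsOddEar H m p) : H ≤ H.addEar e :=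
  ⟨subset_union_left, fun _ _ h => .inl h⟩

theorem addEar_adj (e : IsOddEar H m p) {i : ℕ} (hi : i < m) :
    (H.addEar e).Adj (p i) (p (i + 1)) :=
  .inr ⟨i, hi, .inl ⟨rfl, rfl⟩⟩

theorem isEarExtension_addEar (e : IsOddEar H m p) (h : ¬H.Adj (p 0) (p 1)) :
    IsEarExtension H (H.addEar e) :=
  ⟨m, p, e.odd, e.adj, e.start_mem, e.end_mem, e.not_mem, e.ne, h, rfl, fun _ _ => Iff.rfl⟩

theorem eq_of_apply_eq (e : IsOddEar H m p) {i j : ℕ} (hij : i < j) (hj : j ≤ m)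
    (h : p i = p j) : i = 0 ∧ j = m := by
  rcases Nat.eq_zero_or_pos i with rfl | hi
  · refine ⟨rfl, hj.eq_or_lt.resolve_right fun hjm => e.not_mem j hij hjm (h ▸ e.start_mem)⟩
  · rcases hj.eq_or_lt with rfl | hjm
    · exact absurd (h ▸ e.end_mem) (e.not_mem i hi hij)
    · exact absurd h (e.ne i j hi hij hjm)

theorem injOn (e : IsOddEar H m p) {s : Set ℕ} (hs : ∀ i ∈ s, i ≤ m)
    (h0m : 0 ∈ s → m ∉ s) : InjOn p s := by
  intro i hi j hj h
  by_contra hne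
  rcases Nat.lt_or_gt_of_ne hne with hij | hji
  · obtain ⟨rfl, rfl⟩ := e.eq_of_apply_eq hij (hs j hj) h
    exact h0m hi hj
  · obtain ⟨rfl, rfl⟩ := e.eq_of_apply_eq hji (hs i hi) h.symm
    exact h0m hj hi

end IsOddEar

theorem IsEarExtension.exists_addEar (h : IsEarExtension H H') :
    ∃ (m : ℕ) (p : ℕ → V) (e : IsOddEar H m p), H' = H.addEar e := by
  obtain ⟨m, p, hodd, hadj, h0, hm, hint, hdist, -, hverts, hAdj⟩ := h
  exact ⟨m, p, ⟨hodd, hadj, h0, hm, hint, hdist⟩,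
    Subgraph.ext hverts (funext₂ fun x y => propext (hAdj x y))⟩

theorem IsEarExtension.lt (h : IsEarExtension H H') : H < H' := by
  obtain ⟨m, p, hodd, -, -, -, -, -, hfirst, hverts, hAdj⟩ := h
  refine lt_of_le_of_ne ⟨hverts ▸ subset_union_left, fun x y h => (hAdj x y).2 (.inl h)⟩ ?_
  rintro rfl
  exact hfirst ((hAdj _ _).2 (.inr ⟨0, hodd.pos, .inl ⟨rfl, rfl⟩⟩))

end Ears

section FactorCritical

variable {H : G.Subgraph} {m : ℕ} {p : ℕ → V}

def SimpleGraph.Subgraph.IsFactorCritical (H : G.Subgraph) : Prop :=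
  ∀ u ∈ H.verts, ∃ M ≤ H, M.IsMatching ∧ M.verts = H.verts \ {u}

namespace IsOddEar

theorem exists_isMatching_of_mem (e : IsOddEar H m p) (hH : H.IsFactorCritical) {u : V}
    (hu : u ∈ H.verts) :
    ∃ M ≤ H.addEar e, M.IsMatching ∧ M.verts = (H.addEar e).verts \ {u} := by
  obtain ⟨M, hMH, hM, hMv⟩ := hH u hu
  obtain ⟨n, hn⟩ := e.odd
  obtain ⟨M', hM'le, hM', hM'v⟩ := hM.exists_sup_image_Ico (hMH.trans e.le_addEar) (a := 1) n
    (fun k hk => e.addEar_adj (by omega)) (e.injOn (fun i hi => by simp at hi; omega) (by simp))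
    (by
      rw [hMv, Set.disjoint_left]
      rintro _ ⟨hz, -⟩ ⟨i, hi, rfl⟩
      exact e.not_mem i (by simp at hi; omega) (by simp at hi; omega) hz)
  refine ⟨M', hM'le, hM', ?_⟩
  ext z
  simp only [hM'v, hMv, mem_union, mem_sdiff, mem_image, mem_Ico, mem_singleton_iff,
    e.mem_addEar_verts]
  constructor
  · rintro (⟨hz, hzu⟩ | ⟨i, hi, rfl⟩)
    · exact ⟨.inl hz, hzu⟩
    · exact ⟨.inr ⟨i, by omega, by omega, rfl⟩,
        fun h => e.not_mem i (by omega) (by omega) (h ▸ hu)⟩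
  · rintro ⟨hz | ⟨i, hi0, him, rfl⟩, hzu⟩
    · exact .inl ⟨hz, hzu⟩
    · exact .inr ⟨i, ⟨by omega, by omega⟩, rfl⟩

theorem addEar_verts_sdiff_internal (e : IsOddEar H m p) {t : ℕ} (ht0 : 0 < t) (htm : t < m) :
    (H.addEar e).verts \ {p t} = (H.verts \ {p 0} ∪ p '' Ico 0 t) ∪ p '' Ico (t + 1) m := by
  have hinj : InjOn p (Ico 0 m) := e.injOn (fun i hi => by simp at hi; omega) (by simp)
  ext z
  simp only [mem_union, mem_sdiff, mem_image, mem_Ico, mem_singleton_iff, e.mem_addEar_verts]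
  constructor
  · rintro ⟨hz | ⟨i, hi0, him, rfl⟩, hzt⟩
    · by_cases hz0 : z = p 0
      · exact .inl (.inr ⟨0, by omega, hz0.symm⟩)
      · exact .inl (.inl ⟨hz, hz0⟩)
    · rcases Nat.lt_or_gt_of_ne (fun h : i = t => hzt (h ▸ rfl)) with hit | hti
      · exact .inl (.inr ⟨i, by omega, rfl⟩)
      · exact .inr ⟨i, by omega, rfl⟩
  · rintro ((⟨hz, -⟩ | ⟨i, hi, rfl⟩) | ⟨i, hi, rfl⟩)
    · exact ⟨.inl hz, fun h => e.not_mem t ht0 htm (h ▸ hz)⟩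
    · refine ⟨?_, fun h => absurd (hinj ⟨by omega, by omega⟩ ⟨by omega, htm⟩ h) (by omega)⟩
      rcases Nat.eq_zero_or_pos i with rfl | hi0
      exacts [.inl e.start_mem, .inr ⟨i, hi0, by omega, rfl⟩]
    · exact ⟨.inr ⟨i, by omega, by omega, rfl⟩,
        fun h => absurd (hinj ⟨by omega, by omega⟩ ⟨by omega, htm⟩ h) (by omega)⟩

theorem addEar_verts_sdiff_internal' (e : IsOddEar H m p) {t : ℕ} (ht0 : 0 < t) (htm : t < m) :
    (H.addEar e).verts \ {p t} =
      (H.verts \ {p m} ∪ p '' Ico 1 t) ∪ p '' Ico (t + 1) (m + 1) := by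
  have hinj : InjOn p (Ico 1 (m + 1)) := e.injOn (fun i hi => by simp at hi; omega) (by simp)
  ext z
  simp only [mem_union, mem_sdiff, mem_image, mem_Ico, mem_singleton_iff, e.mem_addEar_verts]
  constructor
  · rintro ⟨hz | ⟨i, hi0, him, rfl⟩, hzt⟩
    · by_cases hzm : z = p m
      · exact .inr ⟨m, by omega, hzm.symm⟩
      · exact .inl (.inl ⟨hz, hzm⟩)
    · rcases Nat.lt_or_gt_of_ne (fun h : i = t => hzt (h ▸ rfl)) with hit | hti
      · exact .inl (.inr ⟨i, by omega, rfl⟩)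
      · exact .inr ⟨i, by omega, rfl⟩
  · rintro ((⟨hz, -⟩ | ⟨i, hi, rfl⟩) | ⟨i, hi, rfl⟩)
    · exact ⟨.inl hz, fun h => e.not_mem t ht0 htm (h ▸ hz)⟩
    · exact ⟨.inr ⟨i, by omega, by omega, rfl⟩,
        fun h => absurd (hinj ⟨by omega, by omega⟩ ⟨by omega, by omega⟩ h) (by omega)⟩
    · refine ⟨?_, fun h =>
        absurd (hinj ⟨by omega, by omega⟩ ⟨by omega, by omega⟩ h) (by omega)⟩
      obtain rfl | him : i = m ∨ i < m := by omega
      exacts [.inl e.end_mem, .inr ⟨i, by omega, him, rfl⟩]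

theorem exists_isMatching_of_even (e : IsOddEar H m p) (hH : H.IsFactorCritical) {t : ℕ}
    (ht0 : 0 < t) (htm : t < m) (ht : Even t) :
    ∃ M ≤ H.addEar e, M.IsMatching ∧ M.verts = (H.addEar e).verts \ {p t} := by
  obtain ⟨M, hMH, hM, hMv⟩ := hH (p 0) e.start_mem
  obtain ⟨n₁, hn₁⟩ : ∃ n, t = 0 + 2 * n := ⟨t / 2, by obtain ⟨k, rfl⟩ := ht; omega⟩
  obtain ⟨n₂, hn₂⟩ : ∃ n, m = t + 1 + 2 * n :=
    ⟨(m - t) / 2, by obtain ⟨k, rfl⟩ := e.odd; omega⟩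
  have hinj : InjOn p (Ico 0 m) := e.injOn (fun i hi => by simp at hi; omega) (by simp)
  obtain ⟨M₁, hM₁le, hM₁, hM₁v⟩ :=
    hM.exists_sup_image_Ico (hMH.trans e.le_addEar) (a := 0) n₁
    (fun k hk => e.addEar_adj (by omega)) (hinj.mono (Ico_subset_Ico_right (by omega))) (by
      rw [hMv, ← hn₁, Set.disjoint_left]
      rintro _ ⟨hz, hz0⟩ ⟨i, hi, rfl⟩
      rcases Nat.eq_zero_or_pos i with rfl | hi0
      exacts [hz0 rfl, e.not_mem i hi0 (by simp at hi; omega) hz])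
  obtain ⟨M₂, hM₂le, hM₂, hM₂v⟩ := hM₁.exists_sup_image_Ico hM₁le (a := t + 1) n₂
    (fun k hk => e.addEar_adj (by omega)) (hinj.mono (Ico_subset_Ico (by omega) (by omega))) (by
      rw [hM₁v, hMv, ← hn₁, ← hn₂, Set.disjoint_left]
      rintro _ (⟨hz, -⟩ | ⟨i, hi, hij⟩) ⟨j, hj, rfl⟩ <;> simp only [mem_Ico] at hj
      · exact e.not_mem j (by omega) (by omega) hz
      · simp only [mem_Ico] at hi
        exact absurd (hinj ⟨by omega, by omega⟩ ⟨by omega, by omega⟩ hij) (by omega))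
  refine ⟨M₂, hM₂le, hM₂, ?_⟩
  rw [hM₂v, hM₁v, hMv, ← hn₁, ← hn₂, e.addEar_verts_sdiff_internal ht0 htm]

theorem exists_isMatching_of_odd (e : IsOddEar H m p) (hH : H.IsFactorCritical) {t : ℕ}
    (htm : t < m) (ht : Odd t) :
    ∃ M ≤ H.addEar e, M.IsMatching ∧ M.verts = (H.addEar e).verts \ {p t} := by
  obtain ⟨M, hMH, hM, hMv⟩ := hH (p m) e.end_mem
  obtain ⟨n₁, hn₁⟩ : ∃ n, t = 1 + 2 * n := ⟨t / 2, by obtain ⟨k, rfl⟩ := ht; omega⟩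
  obtain ⟨n₂, hn₂⟩ : ∃ n, m + 1 = t + 1 + 2 * n :=
    ⟨(m - t) / 2, by obtain ⟨k, rfl⟩ := e.odd; omega⟩
  have hinj : InjOn p (Ico 1 (m + 1)) := e.injOn (fun i hi => by simp at hi; omega) (by simp)
  obtain ⟨M₁, hM₁le, hM₁, hM₁v⟩ :=
    hM.exists_sup_image_Ico (hMH.trans e.le_addEar) (a := 1) n₁
    (fun k hk => e.addEar_adj (by omega)) (hinj.mono (Ico_subset_Ico_right (by omega))) (by
      rw [hMv, ← hn₁, Set.disjoint_left]
      rintro _ ⟨hz, -⟩ ⟨i, hi, rfl⟩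
      exact e.not_mem i (by simp at hi; omega) (by simp at hi; omega) hz)
  obtain ⟨M₂, hM₂le, hM₂, hM₂v⟩ := hM₁.exists_sup_image_Ico hM₁le (a := t + 1) n₂
    (fun k hk => e.addEar_adj (by omega)) (hinj.mono (Ico_subset_Ico (by omega) (by omega))) (by
      rw [hM₁v, hMv, ← hn₁, ← hn₂, Set.disjoint_left]
      rintro _ (⟨hz, hzm⟩ | ⟨i, hi, hij⟩) ⟨j, hj, rfl⟩ <;> simp only [mem_Ico] at hj
      · obtain rfl | hjm : j = m ∨ j < m := by omega
        exacts [hzm rfl, e.not_mem j (by omega) hjm hz]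
      · simp only [mem_Ico] at hi
        exact absurd (hinj ⟨by omega, by omega⟩ ⟨by omega, by omega⟩ hij) (by omega))
  refine ⟨M₂, hM₂le, hM₂, ?_⟩
  rw [hM₂v, hM₁v, hMv, ← hn₁, ← hn₂, e.addEar_verts_sdiff_internal' ht.pos htm]

end IsOddEar

theorem SimpleGraph.Subgraph.IsFactorCritical.addEar (hH : H.IsFactorCritical)
    (e : IsOddEar H m p) : (H.addEar e).IsFactorCritical := by
  rintro u (hu | ⟨t, ht0, htm, rfl⟩)
  · exact e.exists_isMatching_of_mem hH hu
  · rcases Nat.even_or_odd t with ht | ht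
    exacts [e.exists_isMatching_of_even hH ht0 htm ht, e.exists_isMatching_of_odd hH htm ht]

theorem IsEarExtension.isFactorCritical {H' : G.Subgraph} (h : IsEarExtension H H')
    (hH : H.IsFactorCritical) : H'.IsFactorCritical := by
  obtain ⟨m, p, e, rfl⟩ := h.exists_addEar
  exact hH.addEar e

theorem SimpleGraph.Subgraph.isFactorCritical_of_verts_eq_singleton {v : V}
    (h : H.verts = {v}) : H.IsFactorCritical := by
  intro u hu
  obtain rfl : u = v := by rwa [h] at hu
  exact ⟨⊥, bot_le, fun _ h => h.elim, by simp [h]⟩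

theorem isFactorCritical_of_isFactorCritical_top (h : (⊤ : G.Subgraph).IsFactorCritical) :
    IsFactorCritical G :=
  isFactorCritical_iff_forall_exists_isMatching.2 fun u => by
    obtain ⟨M, -, hM, hMv⟩ := h u trivial
    exact ⟨M, hM, by rw [hMv, Subgraph.verts_top, compl_eq_univ_sdiff]⟩

theorem HasOddEarDecomposition.isFactorCritical {r : ℕ} {v : V}
    (h : HasOddEarDecomposition G r v) : IsFactorCritical G := by
  obtain ⟨Hs, h0, -, hstep, htop⟩ := h
  have hHs : ∀ i ≤ r, (Hs i).IsFactorCritical := by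
    intro i hi
    induction i with
    | zero => exact Subgraph.isFactorCritical_of_verts_eq_singleton h0
    | succ i ih => exact (hstep i (by omega)).isFactorCritical (ih (by omega))
  exact isFactorCritical_of_isFactorCritical_top (htop ▸ hHs r le_rfl)

end FactorCritical

section Walk

variable {f g : V → V} {y : V}

def altWalk (f g : V → V) (y : V) : ℕ → V
  | 0 => y
  | t + 1 => (if t % 2 = 0 then f else g) (altWalk f g y t)

theorem altWalk_succ (t : ℕ) :
    altWalk f g y (t + 1) = (if t % 2 = 0 then f else g) (altWalk f g y t) :=
  rfl

theorem altWalk_eq_of_succ (hf : Involutive f) (hg : Involutive g) (t : ℕ) :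
    altWalk f g y t = (if t % 2 = 0 then f else g) (altWalk f g y (t + 1)) := by
  rw [altWalk_succ]
  split_ifs
  exacts [(hf _).symm, (hg _).symm]

/-- A first repetition `u s = u t` of the walk `u` would, both maps being involutions, yield an
earlier one `u (s ± 1) = u (t - 1)`, unless `u s` is a fixed point of `f` (hence in `S`) or of `g`
(hence equal to `u 0 = y`). -/
theorem altWalk_ne (hf : Involutive f) (hg : Involutive g) {S : Set V}
    (hfS : ∀ x, f x = x → x ∈ S) (hgy : ∀ x, g x = x ↔ x = y) (t : ℕ)
    (hS : ∀ r < t, altWalk f g y r ∉ S) : ∀ s < t, altWalk f g y s ≠ altWalk f g y t := by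
  induction t using Nat.strong_induction_on with
  | _ t ih =>
  intro s hst heq
  obtain ⟨t, rfl⟩ : ∃ t', t = t' + 1 := ⟨t - 1, by omega⟩
  have ih' : ∀ k < t + 1, ∀ s < k, altWalk f g y s ≠ altWalk f g y k :=
    fun k hk => ih k hk fun r hr => hS r (by omega)
  have back := altWalk_eq_of_succ (y := y) hf hg
  by_cases hpar : s % 2 = t % 2
  · have h1 : altWalk f g y (s + 1) = altWalk f g y t := by
      rw [altWalk_succ, heq, back t, hpar]
    rcases Nat.lt_or_ge (s + 1) t with hlt | hge
    · exact ih' t (by omega) (s + 1) hlt h1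
    obtain rfl : s = t := by omega
    have hfix := (altWalk_succ (f := f) (g := g) (y := y) s).symm.trans heq.symm
    split_ifs at hfix
    · exact hS s (by omega) (hfS _ hfix)
    · exact ih' s (by omega) 0 (by omega) ((hgy _).1 hfix).symm
  · rcases s with _ | s
    · have hy : altWalk f g y t = y := by
        rw [back t, if_neg (by omega), ← heq]
        exact (hgy y).2 rfl
      exact ih' t (by omega) 0 (by omega) hy.symm
    · have h1 : altWalk f g y s = altWalk f g y t := by
        rw [back s, heq, back t, show s % 2 = t % 2 by omega]
      exact ih' t (by omega) s (by omega) h1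

theorem exists_altWalk_mem [Finite V] (hf : Involutive f) (hg : Involutive g) {S : Set V}
    (hfS : ∀ x, f x = x → x ∈ S) (hSf : ∀ x ∈ S, f x ∈ S)
    (hgy : ∀ x, g x = x ↔ x = y) :
    ∃ j, j % 2 = 0 ∧ altWalk f g y j ∈ S ∧ (∀ r < j, altWalk f g y r ∉ S) ∧
      ∀ s t, s < t → t ≤ j → altWalk f g y s ≠ altWalk f g y t := by
  classical
  have hex : ∃ j, altWalk f g y j ∈ S := by
    by_contra! h
    obtain ⟨a, b, hab, heq⟩ := Finite.exists_ne_map_eq_of_infinite (altWalk f g y)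
    rcases Nat.lt_or_gt_of_ne hab with hlt | hlt
    exacts [altWalk_ne hf hg hfS hgy b (fun r _ => h r) a hlt heq,
      altWalk_ne hf hg hfS hgy a (fun r _ => h r) b hlt heq.symm]
  have hmin : ∀ r < Nat.find hex, altWalk f g y r ∉ S := fun r => Nat.find_min hex
  refine ⟨Nat.find hex, ?_, Nat.find_spec hex, hmin,
    fun s t hst ht => altWalk_ne hf hg hfS hgy t (fun r hr => hmin r (by omega)) s hst⟩
  -- `S` is closed under `f`, so the walk cannot enter it by an `f`-step.
  by_contra hodd
  apply hmin (Nat.find hex - 1) (by omega)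
  rw [altWalk_eq_of_succ hf hg, if_pos (by omega), Nat.sub_add_cancel (by omega)]
  exact hSf _ (Nat.find_spec hex)

end Walk

section PartnerClosed

variable {H : G.Subgraph} {f : V → V} {v : V}

def SimpleGraph.Subgraph.IsPartnerClosed (H : G.Subgraph) (f : V → V) (v : V) : Prop :=
  v ∈ H.verts ∧ ∀ z ∈ H.verts, z ≠ v → H.Adj z (f z)

namespace SimpleGraph.Subgraph.IsPartnerClosed

theorem apply_mem (hH : H.IsPartnerClosed f v) (hfv : f v = v) {z : V} (hz : z ∈ H.verts) :
    f z ∈ H.verts := by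
  by_cases hzv : z = v
  · rw [hzv, hfv]
    exact hH.1
  · exact H.edge_vert (hH.2 z hz hzv).symm

theorem addEar {m : ℕ} {p : ℕ → V} (hH : H.IsPartnerClosed f v) (e : IsOddEar H m p)
    (hpf : ∀ i, 0 < i → i < m → f (p i) = p (i - 1) ∨ f (p i) = p (i + 1)) :
    (H.addEar e).IsPartnerClosed f v := by
  refine ⟨e.le_addEar.1 hH.1, ?_⟩
  rintro z (hz | ⟨i, hi0, him, rfl⟩) hzv
  · exact e.le_addEar.2 (hH.2 z hz hzv)
  · rcases hpf i hi0 him with h | h <;> rw [h]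
    · have := e.addEar_adj (i := i - 1) (by omega)
      rwa [Nat.sub_add_cancel hi0, Subgraph.adj_comm] at this
    · exact e.addEar_adj him

theorem exists_isEarExtension_of_adj_of_mem (hH : H.IsPartnerClosed f v) {a b : V}
    (hab : G.Adj a b) (ha : a ∈ H.verts) (hb : b ∈ H.verts) (hnab : ¬H.Adj a b) :
    ∃ H', IsEarExtension H H' ∧ H'.IsPartnerClosed f v := by
  let p : ℕ → V := fun i => if i = 0 then a else b
  have e : IsOddEar H 1 p := by
    refine ⟨odd_one, fun i hi => ?_, ha, hb, by omega, by omega⟩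
    obtain rfl : i = 0 := by omega
    exact hab
  exact ⟨H.addEar e, e.isEarExtension_addEar hnab, hH.addEar e (by omega)⟩

theorem exists_isEarExtension_of_adj_of_not_mem [Finite V] (hG : _root_.IsFactorCritical G)
    (hf : IsPartnerFunction G v f) (hH : H.IsPartnerClosed f v) {x y : V} (hxy : G.Adj x y)
    (hx : x ∈ H.verts) (hy : y ∉ H.verts) :
    ∃ H', IsEarExtension H H' ∧ H'.IsPartnerClosed f v := by
  obtain ⟨g, hg⟩ := hG.exists_isPartnerFunction y
  obtain ⟨j, hj2, hjH, hbefore, hinj⟩ := exists_altWalk_mem hf.involutive hg.involutive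
    (fun z hz => (hf.eq_self_iff z).1 hz ▸ hH.1)
    (fun z => hH.apply_mem ((hf.eq_self_iff v).2 rfl)) hg.eq_self_iff
  have hj0 : 0 < j := Nat.pos_of_ne_zero fun h => hy (by rwa [h] at hjH)
  let p : ℕ → V := fun | 0 => x | i + 1 => altWalk f g y i
  have e : IsOddEar H (j + 1) p := by
    refine ⟨Nat.odd_iff.2 (by omega), ?_, hx, hjH, ?_, ?_⟩
    · rintro (_ | i) hi
      · exact hxy
      · change G.Adj (altWalk f g y i) (altWalk f g y (i + 1))
        rw [altWalk_succ]
        split_ifs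
        · exact hf.adj _ fun h => hbefore i (by omega) (h ▸ hH.1)
        · exact hg.adj _ fun h => hinj 0 i (by omega) (by omega) h.symm
    · intro i hi0 hij
      obtain ⟨i, rfl⟩ : ∃ k, i = k + 1 := ⟨i - 1, by omega⟩
      exact hbefore i (by omega)
    · intro i i' hi0 hii' hi'j
      obtain ⟨i, rfl⟩ : ∃ k, i = k + 1 := ⟨i - 1, by omega⟩
      obtain ⟨i', rfl⟩ : ∃ k, i' = k + 1 := ⟨i' - 1, by omega⟩
      exact hinj i i' (by omega) (by omega)
  refine ⟨H.addEar e, e.isEarExtension_addEar fun h => hy (H.edge_vert h.symm),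
    hH.addEar e fun i hi0 hij => ?_⟩
  obtain ⟨i, rfl⟩ : ∃ k, i = k + 1 := ⟨i - 1, by omega⟩
  obtain ⟨k, rfl | rfl⟩ := Nat.even_or_odd' i
  · right
    change f (altWalk f g y (2 * k)) = altWalk f g y (2 * k + 1)
    rw [altWalk_succ, if_pos (by omega)]
  · left
    change f (altWalk f g y (2 * k + 1)) = altWalk f g y (2 * k)
    rw [altWalk_succ, if_pos (by omega), hf.involutive]

theorem eq_top [Finite V] (hG : _root_.IsFactorCritical G) (hf : IsPartnerFunction G v f)
    (hH : H.IsPartnerClosed f v)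
    (hchord : ∀ a b, G.Adj a b → a ∈ H.verts → b ∈ H.verts → H.Adj a b)
    (hcross : ∀ x y, G.Adj x y → x ∈ H.verts → y ∈ H.verts) : H = ⊤ := by
  have hfv : f v = v := (hf.eq_self_iff v).2 rfl
  have hverts : H.verts = univ := by
    refine eq_univ_of_forall fun w => by_contra fun hw => ?_
    obtain ⟨g, hg⟩ := hG.exists_isPartnerFunction w
    have hne : ∀ z ∈ H.verts, z ≠ w := fun z hz h => hw (h ▸ hz)
    have hH_even : Even H.verts.ncard :=
      hg.involutive.even_ncard (fun z hz => hcross _ _ (hg.adj z (hne z hz)) hz)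
        fun z hz => (hg.eq_self_iff z).not.2 (hne z hz)
    have hHv_even : Even (H.verts \ {v}).ncard :=
      hf.involutive.even_ncard
        (fun z ⟨hz, hzv⟩ => ⟨hH.apply_mem hfv hz,
          fun h => hzv (hf.involutive.injective (h.trans hfv.symm))⟩)
        fun z ⟨_, hzv⟩ => (hf.eq_self_iff z).not.2 hzv
    have := ncard_sdiff_singleton_add_one hH.1 (toFinite H.verts)
    rw [Nat.even_iff] at hH_even hHv_even
    omega
  refine eq_top_iff.2 ⟨by simp [hverts], fun a b h => hchord a b h ?_ ?_⟩ <;> simp [hverts]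

theorem exists_isEarExtension [Finite V] (hG : _root_.IsFactorCritical G)
    (hf : IsPartnerFunction G v f) (hH : H.IsPartnerClosed f v) (hne : H ≠ ⊤) :
    ∃ H', IsEarExtension H H' ∧ H'.IsPartnerClosed f v := by
  by_cases hchord : ∃ a b, G.Adj a b ∧ a ∈ H.verts ∧ b ∈ H.verts ∧ ¬H.Adj a b
  · obtain ⟨a, b, hab, ha, hb, hnab⟩ := hchord
    exact hH.exists_isEarExtension_of_adj_of_mem hab ha hb hnab
  by_cases hcross : ∃ x y, G.Adj x y ∧ x ∈ H.verts ∧ y ∉ H.verts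
  · obtain ⟨x, y, hxy, hx, hy⟩ := hcross
    exact hH.exists_isEarExtension_of_adj_of_not_mem hG hf hxy hx hy
  push Not at hchord hcross
  exact absurd (hH.eq_top hG hf hchord hcross) hne

end SimpleGraph.Subgraph.IsPartnerClosed

theorem IsFactorCritical.exists_hasOddEarDecomposition [Finite V] (hG : IsFactorCritical G)
    (v : V) : ∃ r, HasOddEarDecomposition G r v := by
  obtain ⟨f, hf⟩ := hG.exists_isPartnerFunction v
  have htop : Relation.ReflTransGen IsEarExtension (G.singletonSubgraph v) ⊤ ∧
      (⊤ : G.Subgraph).IsPartnerClosed f v := by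
    refine WellFoundedGT.induction_top
      (P := fun H => Relation.ReflTransGen IsEarExtension (G.singletonSubgraph v) H ∧
        H.IsPartnerClosed f v) ⟨_, .refl, rfl, fun z hz hzv => absurd hz hzv⟩ ?_
    rintro H hne ⟨hreach, hH⟩
    obtain ⟨H', hext, hH'⟩ := hH.exists_isEarExtension hG hf hne
    exact ⟨H', hext.lt, hreach.tail hext, hH'⟩
  obtain ⟨r, Hs, h0, hchain, hr⟩ := htop.1.exists_seq
  exact ⟨r, Hs, by rw [h0]; rfl, by rw [h0]; exact fun _ _ h => h, hchain, hr⟩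

end PartnerClosed

end Graph

/-- A finite (nonempty) graph is factor-critical if and only if it admits an odd
ear decomposition; moreover, if `G` is factor-critical then for every vertex `v`
there is an odd ear decomposition starting from `v`. -/
theorem factorCritical_iff_oddEarDecomposition {V : Type*} [Fintype V] [Nonempty V]
    (G : SimpleGraph V) :
    (IsFactorCritical G ↔ ∃ r v, HasOddEarDecomposition G r v) ∧
    (IsFactorCritical G → ∀ v : V, ∃ r, HasOddEarDecomposition G r v) := by
  refine ⟨⟨fun hG => ?_, fun ⟨_, _, h⟩ => h.isFactorCritical⟩,
    fun hG => hG.exists_hasOddEarDecomposition⟩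
  obtain ⟨v⟩ := ‹Nonempty V›
  obtain ⟨r, h⟩ := hG.exists_hasOddEarDecomposition v
  exact ⟨r, v, h⟩
end

section
/- For every finite graph G, each connected component of the subgraph of G induced on D(G) is factor-critical. -/
/-- A maximum matching of `G`: a matching with the greatest possible number of
edges. -/
def IsMaximumMatching {V : Type*} (G : SimpleGraph V) (M : G.Subgraph) : Prop :=
  M.IsMatching ∧ ∀ M' : G.Subgraph, M'.IsMatching → M'.edgeSet.ncard ≤ M.edgeSet.ncard

/-- `D(G)`: the set of vertices left unmatched by some maximum matching of `G`. -/
def Dset {V : Type*} (G : SimpleGraph V) : Set V :=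
  {v | ∃ M : G.Subgraph, IsMaximumMatching G M ∧ v ∉ M.verts}

/-- `A(G)`: the set of vertices not in `D(G)` having a neighbor in `D(G)`. -/
def Aset {V : Type*} (G : SimpleGraph V) : Set V :=
  {v | v ∉ Dset G ∧ ∃ w ∈ Dset G, G.Adj v w}

/-- `C(G) = V(G) \ (D(G) ∪ A(G))`. -/
def Cset {V : Type*} (G : SimpleGraph V) : Set V :=
  (Dset G ∪ Aset G)ᶜ

/-!
Write `D(s)` for the vertices of `s` missed by some maximum matching of `G[s]`. Deleting a vertex
that is not in `D` but has a neighbour in `D` does not change `D` (stability), so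
`D(G - A(G)) = D(G)`. No edge of `G - A(G)` leaves `D(G)`, hence a component `K` of `G[D(G)]` is a
component of `G - A(G)`, maximum matchings restrict to it, and `D(K) = K`. Gallai's lemma then
says that a connected graph all of whose vertices are in `D` is factor-critical.

Both stability and Gallai's lemma are proved by splicing two matchings along a component of their
union: such a component is an alternating path or cycle, so it contains at most two vertices
missed by one of the matchings, and exchanging the matchings on it keeps their total size.
-/

open Set

namespace SimpleGraph

variable {V : Type*}

section MaxDegreeTwo

variable {H : SimpleGraph V} [Finite V]

theorem Walk.IsPath.mem_support_of_adj (hdeg : ∀ v, (H.neighborSet v).ncard ≤ 2) {x y : V}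
    (hxy : x ≠ y) (hx : (H.neighborSet x).Subsingleton) (hy : (H.neighborSet y).Subsingleton)
    {p : H.Walk x y} (hp : p.IsPath) {v w : V} (hv : v ∈ p.support) (hvw : H.Adj v w) :
    w ∈ p.support := by
  have hnil : ¬ p.Nil := Walk.not_nil_of_ne hxy
  obtain ⟨i, rfl, hi⟩ := Walk.mem_support_iff_exists_getVert.mp hv
  rcases Nat.eq_zero_or_pos i with rfl | hi₀
  · rw [Walk.getVert_zero] at hvw
    rw [hx hvw (p.adj_snd hnil)]
    exact p.getVert_mem_support 1
  rcases hi.eq_or_lt with rfl | hilt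
  · rw [Walk.getVert_length] at hvw
    rw [hy hvw (p.adj_penultimate hnil).symm]
    exact p.getVert_mem_support _
  -- an inner vertex already has its two path neighbours, which are then all its neighbours
  have heq := Set.eq_of_subset_of_ncard_le (p.toSubgraph.neighborSet_subset (p.getVert i))
    (by rw [hp.ncard_neighborSet_toSubgraph_internal_eq_two hi₀.ne' hilt]; exact hdeg _)
    (toFinite _)
  have hw : p.toSubgraph.Adj (p.getVert i) w := by
    rw [← Subgraph.mem_neighborSet, heq]
    exact hvw
  exact p.mem_verts_toSubgraph.mp hw.snd_mem

theorem not_reachable_of_subsingleton_neighborSet (hdeg : ∀ v, (H.neighborSet v).ncard ≤ 2)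
    {x y z : V} (hxy : x ≠ y) (hzx : z ≠ x) (hzy : z ≠ y) (hx : (H.neighborSet x).Subsingleton)
    (hy : (H.neighborSet y).Subsingleton) (hz : (H.neighborSet z).Subsingleton)
    (hrxy : H.Reachable x y) : ¬ H.Reachable x z := by
  obtain ⟨p, hp⟩ := hrxy.exists_isPath
  rintro ⟨q⟩
  suffices ∀ {a b} (q : H.Walk a b), a ∈ p.support → b ∈ p.support from
    hp.isTrail.not_mem_support_of_subsingleton_neighborSet hzx hzy hz
      (this q p.start_mem_support)
  intro a b q
  induction q with
  | nil => exact id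
  | cons h _ ih => exact fun ha => ih (hp.mem_support_of_adj hdeg hxy hx hy ha h)

end MaxDegreeTwo

namespace Subgraph

variable {G : SimpleGraph V} {M N : G.Subgraph} {c : Set V} {a b v : V}

lemma IsMatching.neighborSet_subsingleton (hM : M.IsMatching) (v : V) :
    (M.neighborSet v).Subsingleton :=
  fun _ h₁ _ h₂ => hM.eq_of_adj_left h₁ h₂

lemma IsMatching.ncard_neighborSet_sup_le_two [Finite V] (hM : M.IsMatching)
    (hN : N.IsMatching) (v : V) : ((M ⊔ N).spanningCoe.neighborSet v).ncard ≤ 2 :=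
  calc ((M ⊔ N).neighborSet v).ncard
      ≤ (M.neighborSet v).ncard + (N.neighborSet v).ncard := by
        rw [neighborSet_sup]
        exact ncard_union_le _ _
    _ ≤ 1 + 1 := add_le_add
        (ncard_le_one_iff_subsingleton.mpr (hM.neighborSet_subsingleton v))
        (ncard_le_one_iff_subsingleton.mpr (hN.neighborSet_subsingleton v))

lemma IsMatching.neighborSet_sup_subsingleton (hM : M.IsMatching) (hN : N.IsMatching)
    (hv : v ∉ M.verts ∨ v ∉ N.verts) : ((M ⊔ N).spanningCoe.neighborSet v).Subsingleton := by
  change ((M ⊔ N).neighborSet v).Subsingleton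
  have hempty {K : G.Subgraph} (hvK : v ∉ K.verts) : K.neighborSet v = ∅ :=
    eq_empty_of_forall_notMem fun _ hw => hvK hw.fst_mem
  rw [neighborSet_sup]
  rcases hv with hv | hv
  · rw [hempty hv, empty_union]
    exact hN.neighborSet_subsingleton v
  · rw [hempty hv, union_empty]
    exact hM.neighborSet_subsingleton v

lemma IsMatching.notMem_supp_sup [Finite V] (hM : M.IsMatching) (hN : N.IsMatching)
    (C : (M ⊔ N).spanningCoe.ConnectedComponent) {x y z : V} (hxy : x ≠ y) (hzx : z ≠ x)
    (hzy : z ≠ y) (hx : x ∉ M.verts ∨ x ∉ N.verts) (hy : y ∉ M.verts ∨ y ∉ N.verts)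
    (hz : z ∉ M.verts ∨ z ∉ N.verts) (hxC : x ∈ C.supp) (hyC : y ∈ C.supp) : z ∉ C.supp :=
  fun hzC => not_reachable_of_subsingleton_neighborSet (hM.ncard_neighborSet_sup_le_two hN)
    hxy hzx hzy (hM.neighborSet_sup_subsingleton hN hx) (hM.neighborSet_sup_subsingleton hN hy)
    (hM.neighborSet_sup_subsingleton hN hz) (C.reachable_of_mem_supp hxC hyC)
    (C.reachable_of_mem_supp hxC hzC)

lemma IsMatching.deleteVerts (hM : M.IsMatching) (hc : ∀ ⦃x y⦄, M.Adj x y → (x ∈ c ↔ y ∈ c)) :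
    (M.deleteVerts c).IsMatching := by
  rintro v ⟨hv, hvc⟩
  obtain ⟨w, hvw, huniq⟩ := hM hv
  exact ⟨w, deleteVerts_adj.mpr ⟨hv, hvc, hvw.snd_mem, mt (hc hvw).mpr hvc, hvw⟩,
    fun y hy => huniq y (deleteVerts_adj.mp hy).2.2.2.2⟩

lemma ncard_edgeSet_deleteVerts_add_compl [Finite V]
    (hc : ∀ ⦃x y⦄, M.Adj x y → (x ∈ c ↔ y ∈ c)) :
    (M.deleteVerts c).edgeSet.ncard + (M.deleteVerts cᶜ).edgeSet.ncard = M.edgeSet.ncard := by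
  rw [← ncard_union_eq _ (toFinite _) (toFinite _)]
  · congr 1
    ext e
    refine Sym2.ind (fun x y => ?_) e
    simp only [mem_union, Subgraph.mem_edgeSet, deleteVerts_adj, mem_compl_iff, not_not]
    constructor
    · rintro (h | h) <;> exact h.2.2.2.2
    · intro h
      by_cases hx : x ∈ c
      · exact Or.inr ⟨h.fst_mem, hx, h.snd_mem, (hc h).mp hx, h⟩
      · exact Or.inl ⟨h.fst_mem, hx, h.snd_mem, mt (hc h).mpr hx, h⟩
  · rw [Set.disjoint_left]
    intro e
    refine Sym2.ind (fun x y => ?_) e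
    simp only [Subgraph.mem_edgeSet, deleteVerts_adj, mem_compl_iff, not_not]
    exact fun h₁ h₂ => h₁.2.1 h₂.2.1

lemma edgeSet_deleteVerts_compl_pair (hab : M.Adj a b) :
    (M.deleteVerts {a, b}ᶜ).edgeSet = {s(a, b)} := by
  ext e
  refine Sym2.ind (fun x y => ?_) e
  simp only [Subgraph.mem_edgeSet, deleteVerts_adj, mem_compl_iff, not_not, mem_insert_iff,
    mem_singleton_iff, Sym2.eq_iff]
  constructor
  · rintro ⟨-, rfl | rfl, -, rfl | rfl, h⟩
    · exact absurd h (M.loopless.irrefl _)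
    · exact Or.inl ⟨rfl, rfl⟩
    · exact Or.inr ⟨rfl, rfl⟩
    · exact absurd h (M.loopless.irrefl _)
  · rintro (⟨rfl, rfl⟩ | ⟨rfl, rfl⟩)
    · exact ⟨hab.fst_mem, Or.inl rfl, hab.snd_mem, Or.inr rfl, hab⟩
    · exact ⟨hab.snd_mem, Or.inr rfl, hab.fst_mem, Or.inl rfl, hab.symm⟩

lemma IsMatching.adj_mem_pair_iff (hM : M.IsMatching) (hab : M.Adj a b) :
    ∀ ⦃x y⦄, M.Adj x y → (x ∈ ({a, b} : Set V) ↔ y ∈ ({a, b} : Set V)) := by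
  intro x y hxy
  simp only [mem_insert_iff, mem_singleton_iff]
  constructor
  · rintro (rfl | rfl)
    · exact Or.inr (hM.eq_of_adj_left hxy hab)
    · exact Or.inl (hM.eq_of_adj_left hxy hab.symm)
  · rintro (rfl | rfl)
    · exact Or.inr (hM.eq_of_adj_left hxy.symm hab)
    · exact Or.inl (hM.eq_of_adj_left hxy.symm hab.symm)

lemma IsMatching.ncard_edgeSet_deleteVerts_pair [Finite V] (hM : M.IsMatching)
    (hab : M.Adj a b) : (M.deleteVerts {a, b}).edgeSet.ncard + 1 = M.edgeSet.ncard := by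
  rw [← ncard_edgeSet_deleteVerts_add_compl (hM.adj_mem_pair_iff hab),
    edgeSet_deleteVerts_compl_pair hab, ncard_singleton]

lemma IsMatching.sup_subgraphOfAdj (hM : M.IsMatching) (hab : G.Adj a b) (ha : a ∉ M.verts)
    (hb : b ∉ M.verts) : (M ⊔ G.subgraphOfAdj hab).IsMatching := by
  refine hM.sup (.subgraphOfAdj hab) ?_
  rw [hM.support_eq_verts, (IsMatching.subgraphOfAdj hab).support_eq_verts, subgraphOfAdj_verts,
    disjoint_insert_right, disjoint_singleton_right]
  exact ⟨ha, hb⟩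

lemma ncard_edgeSet_sup_subgraphOfAdj [Finite V] (hab : G.Adj a b) (ha : a ∉ M.verts) :
    (M ⊔ G.subgraphOfAdj hab).edgeSet.ncard = M.edgeSet.ncard + 1 := by
  rw [edgeSet_sup, edgeSet_subgraphOfAdj, ncard_union_eq _ (toFinite _) (toFinite _),
    ncard_singleton]
  exact disjoint_singleton_right.mpr fun h => ha (M.edge_vert h)

def splice (M N : G.Subgraph) (c : Set V) : G.Subgraph := M.deleteVerts c ⊔ N.deleteVerts cᶜ

lemma mem_splice_verts_of_mem (hv : v ∈ c) : v ∈ (M.splice N c).verts ↔ v ∈ N.verts := by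
  simp [splice, hv]

lemma mem_splice_verts_of_notMem (hv : v ∉ c) : v ∈ (M.splice N c).verts ↔ v ∈ M.verts := by
  simp [splice, hv]

lemma splice_verts_subset : (M.splice N c).verts ⊆ M.verts ∪ N.verts :=
  union_subset_union sdiff_subset sdiff_subset

lemma IsMatching.splice (hM : M.IsMatching) (hN : N.IsMatching)
    (hcM : ∀ ⦃x y⦄, M.Adj x y → (x ∈ c ↔ y ∈ c)) (hcN : ∀ ⦃x y⦄, N.Adj x y → (x ∈ c ↔ y ∈ c)) :
    (M.splice N c).IsMatching := by
  have hM' := hM.deleteVerts hcM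
  have hN' := hN.deleteVerts (c := cᶜ) fun _ _ h => not_congr (hcN h)
  refine hM'.sup hN' ?_
  rw [hM'.support_eq_verts, hN'.support_eq_verts, deleteVerts_verts, deleteVerts_verts]
  exact Set.disjoint_left.mpr fun _ hx hy => hy.2 hx.2

lemma ncard_edgeSet_splice [Finite V] (M N : G.Subgraph) (c : Set V) :
    (M.splice N c).edgeSet.ncard =
      (M.deleteVerts c).edgeSet.ncard + (N.deleteVerts cᶜ).edgeSet.ncard := by
  rw [splice, edgeSet_sup]
  refine ncard_union_eq (Set.disjoint_left.mpr fun e he₁ he₂ => ?_) (toFinite _) (toFinite _)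
  induction e using Sym2.ind with
  | _ x y => exact (deleteVerts_adj.mp he₂).2.1 (deleteVerts_adj.mp he₁).2.1

lemma ncard_edgeSet_splice_add_splice [Finite V]
    (hcM : ∀ ⦃x y⦄, M.Adj x y → (x ∈ c ↔ y ∈ c)) (hcN : ∀ ⦃x y⦄, N.Adj x y → (x ∈ c ↔ y ∈ c)) :
    (M.splice N c).edgeSet.ncard + (N.splice M c).edgeSet.ncard =
      M.edgeSet.ncard + N.edgeSet.ncard := by
  rw [ncard_edgeSet_splice, ncard_edgeSet_splice, ← ncard_edgeSet_deleteVerts_add_compl hcM,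
    ← ncard_edgeSet_deleteVerts_add_compl hcN]
  ring

lemma IsMatching.isPerfectMatching_comap {W : Type*} {G' : SimpleGraph W} (f : G' ↪g G)
    (hM : M.IsMatching) (h : M.verts = range f) : (M.comap f.toHom).IsPerfectMatching := by
  rw [isPerfectMatching_iff]
  intro x
  obtain ⟨y', hxy', huniq⟩ := hM (h ▸ mem_range_self x : f x ∈ M.verts)
  obtain ⟨y, rfl⟩ : y' ∈ range f := h ▸ hxy'.snd_mem
  exact ⟨y, ⟨f.map_adj_iff.mp (M.adj_sub hxy'), hxy'⟩, fun z hz => f.injective (huniq _ hz.2)⟩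

end Subgraph

open Subgraph

variable {G : SimpleGraph V} {s t k : Set V} {M N : G.Subgraph} {a u v w : V}

/-- Matchings of `G` inside `s` stand for the matchings of `G[s]`. -/
structure IsMaximumMatchingIn (s : Set V) (M : G.Subgraph) : Prop where
  isMatching : M.IsMatching
  verts_subset : M.verts ⊆ s
  ncard_le ⦃N : G.Subgraph⦄ : N.IsMatching → N.verts ⊆ s → N.edgeSet.ncard ≤ M.edgeSet.ncard

variable (G) in
def inessentialVerts (s : Set V) : Set V :=
  {v ∈ s | ∃ M : G.Subgraph, IsMaximumMatchingIn s M ∧ v ∉ M.verts}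

lemma Dset_eq_inessentialVerts_univ (G : SimpleGraph V) :
    Dset G = G.inessentialVerts univ := by
  ext v
  constructor
  · rintro ⟨M, ⟨hM, hmax⟩, hv⟩
    exact ⟨trivial, M, ⟨hM, subset_univ _, fun N hN _ => hmax N hN⟩, hv⟩
  · rintro ⟨-, M, hM, hv⟩
    exact ⟨M, ⟨hM.isMatching, fun N hN => hM.ncard_le hN (subset_univ _)⟩, hv⟩

lemma exists_isMaximumMatchingIn [Finite V] (s : Set V) :
    ∃ M : G.Subgraph, IsMaximumMatchingIn s M := by
  obtain ⟨M, ⟨hM, hMs⟩, hmax⟩ := exists_max_image {M : G.Subgraph | M.IsMatching ∧ M.verts ⊆ s}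
    (fun M => M.edgeSet.ncard) (toFinite _) ⟨⊥, fun _ hv => hv.elim, empty_subset s⟩
  exact ⟨M, hM, hMs, fun N hN hNs => hmax N ⟨hN, hNs⟩⟩

namespace IsMaximumMatchingIn

lemma of_ncard_le (hM : IsMaximumMatchingIn s M) (hN : N.IsMatching) (hNs : N.verts ⊆ s)
    (h : M.edgeSet.ncard ≤ N.edgeSet.ncard) : IsMaximumMatchingIn s N :=
  ⟨hN, hNs, fun _ hK hKs => (hM.ncard_le hK hKs).trans h⟩

lemma ncard_eq (hM : IsMaximumMatchingIn s M) (hN : IsMaximumMatchingIn s N) :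
    M.edgeSet.ncard = N.edgeSet.ncard :=
  (hN.ncard_le hM.isMatching hM.verts_subset).antisymm
    (hM.ncard_le hN.isMatching hN.verts_subset)

lemma not_adj [Finite V] (hM : IsMaximumMatchingIn s M) (hu : u ∈ s) (hv : v ∈ s)
    (huM : u ∉ M.verts) (hvM : v ∉ M.verts) : ¬ G.Adj u v := by
  intro huv
  have := hM.ncard_le (hM.isMatching.sup_subgraphOfAdj huv huM hvM)
    (union_subset hM.verts_subset (by simp [insert_subset_iff, hu, hv]))
  rw [ncard_edgeSet_sup_subgraphOfAdj huv huM] at this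
  omega

lemma splice [Finite V] {c : Set V} (hM : IsMaximumMatchingIn s M)
    (hN : IsMaximumMatchingIn t N) (hcM : ∀ ⦃x y⦄, M.Adj x y → (x ∈ c ↔ y ∈ c))
    (hcN : ∀ ⦃x y⦄, N.Adj x y → (x ∈ c ↔ y ∈ c)) (hs : (M.splice N c).verts ⊆ s)
    (ht : (N.splice M c).verts ⊆ t) : IsMaximumMatchingIn t (N.splice M c) := by
  refine hN.of_ncard_le (hN.isMatching.splice hM.isMatching hcN hcM) ht ?_
  have := ncard_edgeSet_splice_add_splice hcM hcN
  have := hM.ncard_le (hM.isMatching.splice hN.isMatching hcM hcN) hs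
  omega

lemma ncard_lt_of_notMem_inessentialVerts (hM : IsMaximumMatchingIn s M) (ha : a ∈ s)
    (haD : a ∉ G.inessentialVerts s) (hN : N.IsMatching) (hNs : N.verts ⊆ s \ {a}) :
    N.edgeSet.ncard < M.edgeSet.ncard :=
  (hM.ncard_le hN (hNs.trans sdiff_subset)).lt_of_ne fun h =>
    haD ⟨ha, N, hM.of_ncard_le hN (hNs.trans sdiff_subset) h.ge, fun haN => (hNs haN).2 rfl⟩

lemma exists_diff_singleton [Finite V] (hM : IsMaximumMatchingIn s M) (ha : a ∈ s)
    (haD : a ∉ G.inessentialVerts s) :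
    ∃ M' : G.Subgraph, IsMaximumMatchingIn (s \ {a}) M' ∧ M'.verts ⊆ M.verts ∧
      M'.edgeSet.ncard + 1 = M.edgeSet.ncard := by
  have haM : a ∈ M.verts := by_contra fun haM => haD ⟨ha, M, hM, haM⟩
  obtain ⟨b, hab, -⟩ := hM.isMatching haM
  have hcard := hM.isMatching.ncard_edgeSet_deleteVerts_pair hab
  have hM'a : (M.deleteVerts {a, b}).verts ⊆ s \ {a} := fun x ⟨hx, hxab⟩ =>
    ⟨hM.verts_subset hx, fun hxa => hxab (Or.inl hxa)⟩
  refine ⟨M.deleteVerts {a, b}, ⟨hM.isMatching.deleteVerts (hM.isMatching.adj_mem_pair_iff hab),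
    hM'a, fun N hN hNs => ?_⟩, sdiff_subset, hcard⟩
  have := hM.ncard_lt_of_notMem_inessentialVerts ha haD hN hNs
  omega

/-- Gallai's lemma. Induction on the walk: its second vertex `t` is covered by `M`; splicing
into `M`, along the component of `t` in `M ⊔ N`, a maximum matching `N` missing `t` yields a
maximum matching missing `t` and one of the two ends. -/
theorem eq_of_walk [Finite V] (hk : k ⊆ G.inessentialVerts k) (p : G.Walk u v)
    (hp : ∀ x ∈ p.support, x ∈ k) (hM : IsMaximumMatchingIn k M) (hu : u ∉ M.verts)
    (hv : v ∉ M.verts) : u = v := by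
  induction p generalizing M with
  | nil => rfl
  | @cons u t v hut q ih =>
    have huk : u ∈ k := hp u (Walk.start_mem_support _)
    have htk : t ∈ k := hp t (by simp)
    have hq : ∀ x ∈ q.support, x ∈ k := fun x hx => hp x (by simp [hx])
    by_cases htM : t ∉ M.verts
    · exact absurd hut (hM.not_adj huk htk hu htM)
    by_contra huv
    obtain ⟨-, N, hN, htN⟩ := hk htk
    set C := (M ⊔ N).spanningCoe.connectedComponentMk t
    have htC : t ∈ C.supp := rfl
    have hX : IsMaximumMatchingIn k (M.splice N C.supp) :=
      hN.splice hM (fun _ _ h => C.mem_supp_congr_adj (Or.inr h))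
        (fun _ _ h => C.mem_supp_congr_adj (Or.inl h))
        (splice_verts_subset.trans (union_subset hN.verts_subset hM.verts_subset))
        (splice_verts_subset.trans (union_subset hM.verts_subset hN.verts_subset))
    have htX : t ∉ (M.splice N C.supp).verts :=
      fun h => htN ((mem_splice_verts_of_mem htC).mp h)
    have htv : t ≠ v := fun h => hv (h ▸ not_not.mp htM)
    by_cases huC : u ∈ C.supp
    · have hvC : v ∉ C.supp := hM.isMatching.notMem_supp_sup hN.isMatching C hut.ne.symm
        (Ne.symm htv) (Ne.symm huv) (Or.inr htN) (Or.inl hu) (Or.inl hv) htC huC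
      exact htv (ih hq hX htX fun h => hv ((mem_splice_verts_of_notMem hvC).mp h))
    · exact hX.not_adj huk htk (fun h => hu ((mem_splice_verts_of_notMem huC).mp h)) htX hut

end IsMaximumMatchingIn

theorem isFactorCritical_of_range_subset_inessentialVerts [Finite V] {W : Type*}
    {H : SimpleGraph W} (ψ : H ↪g G) (hH : H.Connected)
    (hD : range ψ ⊆ G.inessentialVerts (range ψ)) : IsFactorCritical H := by
  intro x
  obtain ⟨-, M, hM, hxM⟩ := hD (mem_range_self x)
  refine ⟨_, hM.isMatching.isPerfectMatching_comap (ψ.comp (Embedding.induce _)) ?_⟩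
  ext v
  constructor
  · intro hv
    obtain ⟨y, rfl⟩ := hM.verts_subset hv
    exact ⟨⟨y, fun hyx => hxM (hyx ▸ hv)⟩, rfl⟩
  · rintro ⟨⟨y, hyx⟩, rfl⟩
    by_contra hy
    obtain ⟨p⟩ := hH.preconnected y x
    have hp : ∀ z ∈ (p.map ψ.toHom).support, z ∈ range ψ := by
      simp only [Walk.support_map, List.mem_map]
      rintro _ ⟨z, -, rfl⟩
      exact mem_range_self z
    exact hyx (ψ.injective (hM.eq_of_walk hD _ hp hy hxM))

lemma inessentialVerts_subset_diff_singleton [Finite V] (ha : a ∈ s)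
    (haD : a ∉ G.inessentialVerts s) : G.inessentialVerts s ⊆ G.inessentialVerts (s \ {a}) := by
  rintro v ⟨hvs, M, hM, hvM⟩
  have hva : v ≠ a := fun h => haD (h ▸ ⟨hvs, M, hM, hvM⟩)
  obtain ⟨M', hM', hM'M, -⟩ := hM.exists_diff_singleton ha haD
  exact ⟨⟨hvs, hva⟩, M', hM', fun h => hvM (hM'M h)⟩

/-- Take `M` maximum in `s \ {a}` missing `v`, and `N` maximum in `s` missing `w`; `M` is one
edge short of `N`. Splicing them along the component of `v` in `M ⊔ N`, which cannot contain all
of `v`, `a`, `w`, gives a maximum matching of `G[s]` missing `v` (after adding the edge `aw` if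
`a` lies in that component). -/
lemma inessentialVerts_diff_singleton_subset [Finite V] (ha : a ∈ s)
    (haD : a ∉ G.inessentialVerts s) (hw : w ∈ G.inessentialVerts s) (haw : G.Adj a w) :
    G.inessentialVerts (s \ {a}) ⊆ G.inessentialVerts s := by
  rintro v ⟨⟨hvs, hva⟩, M, hM, hvM⟩
  obtain ⟨hws, N, hN, hwN⟩ := hw
  refine ⟨hvs, ?_⟩
  by_contra! hvD
  have haM : a ∉ M.verts := fun h => (hM.verts_subset h).2 rfl
  have hMs : M.verts ⊆ s := hM.verts_subset.trans sdiff_subset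
  have hMN : M.edgeSet.ncard + 1 = N.edgeSet.ncard := by
    obtain ⟨M', hM', -, hM'N⟩ := hN.exists_diff_singleton ha haD
    rw [hM.ncard_eq hM', hM'N]
  set C := (M ⊔ N).spanningCoe.connectedComponentMk v
  have hvC : v ∈ C.supp := rfl
  have hcM : ∀ ⦃x y⦄, M.Adj x y → (x ∈ C.supp ↔ y ∈ C.supp) :=
    fun _ _ h => C.mem_supp_congr_adj (Or.inl h)
  have hcN : ∀ ⦃x y⦄, N.Adj x y → (x ∈ C.supp ↔ y ∈ C.supp) :=
    fun _ _ h => C.mem_supp_congr_adj (Or.inr h)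
  have hcount := ncard_edgeSet_splice_add_splice hcM hcN
  have hX := hN.isMatching.splice hM.isMatching hcN hcM
  have hXs : (N.splice M C.supp).verts ⊆ s :=
    splice_verts_subset.trans (union_subset hN.verts_subset hMs)
  have hvX : v ∉ (N.splice M C.supp).verts := fun h => hvM ((mem_splice_verts_of_mem hvC).mp h)
  have hY := hM.isMatching.splice hN.isMatching hcM hcN
  by_cases haC : a ∈ C.supp
  · have hwC : w ∉ C.supp := hM.isMatching.notMem_supp_sup hN.isMatching C hva
      (fun h => hwN (h ▸ hvD N hN)) haw.ne.symm (Or.inl hvM) (Or.inl haM) (Or.inr hwN) hvC haC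
    have haX : a ∉ (N.splice M C.supp).verts :=
      fun h => haM ((mem_splice_verts_of_mem haC).mp h)
    have hwX : w ∉ (N.splice M C.supp).verts :=
      fun h => hwN ((mem_splice_verts_of_notMem hwC).mp h)
    have := hN.ncard_le hY (splice_verts_subset.trans (union_subset hMs hN.verts_subset))
    have hX' := hN.of_ncard_le (hX.sup_subgraphOfAdj haw haX hwX)
      (union_subset hXs (by simp [insert_subset_iff, ha, hws]))
      (by rw [ncard_edgeSet_sup_subgraphOfAdj haw haX]; omega)
    have hvX' := hvD _ hX'
    simp only [verts_sup, subgraphOfAdj_verts, mem_union, mem_insert_iff,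
      mem_singleton_iff] at hvX'
    rcases hvX' with h | rfl | rfl
    · exact hvX h
    · exact hva rfl
    · exact hwN (hvD N hN)
  · have hYa : (M.splice N C.supp).verts ⊆ s \ {a} := fun x hx =>
      ⟨(splice_verts_subset.trans (union_subset hMs hN.verts_subset)) hx,
        fun hxa => haM ((mem_splice_verts_of_notMem haC).mp ((mem_singleton_iff.mp hxa) ▸ hx))⟩
    have := hM.ncard_le hY hYa
    exact hvX (hvD _ (hN.of_ncard_le hX hXs (by omega)))

lemma inessentialVerts_diff_singleton [Finite V] (ha : a ∈ s) (haD : a ∉ G.inessentialVerts s)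
    (hw : w ∈ G.inessentialVerts s) (haw : G.Adj a w) :
    G.inessentialVerts (s \ {a}) = G.inessentialVerts s :=
  (inessentialVerts_diff_singleton_subset ha haD hw haw).antisymm
    (inessentialVerts_subset_diff_singleton ha haD)

lemma inessentialVerts_diff [Finite V] {A : Set V}
    (hA : ∀ a ∈ A, a ∈ s ∧ a ∉ G.inessentialVerts s ∧ ∃ w ∈ G.inessentialVerts s, G.Adj a w) :
    G.inessentialVerts (s \ A) = G.inessentialVerts s := by
  induction A, toFinite A using Set.Finite.induction_on with
  | empty => rw [sdiff_empty]
  | @insert a B haB _ ih =>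
    have hB := ih fun b hb => hA b (mem_insert_of_mem a hb)
    obtain ⟨has, haD, w, hwD, haw⟩ := hA a (mem_insert a B)
    rw [← hB] at haD hwD
    rw [insert_eq, union_comm, ← sdiff_sdiff,
      inessentialVerts_diff_singleton (show a ∈ s \ B from ⟨has, haB⟩) haD hwD haw, hB]

lemma inessentialVerts_compl_Aset [Finite V] (G : SimpleGraph V) :
    G.inessentialVerts (Aset G)ᶜ = Dset G := by
  rw [Dset_eq_inessentialVerts_univ, compl_eq_univ_sdiff]
  refine inessentialVerts_diff fun a ⟨haD, w, hwD, haw⟩ => ?_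
  rw [Dset_eq_inessentialVerts_univ] at haD hwD
  exact ⟨trivial, haD, w, hwD, haw⟩

lemma inter_inessentialVerts_subset [Finite V] (hks : k ⊆ s)
    (hk : ∀ x ∈ k, ∀ y ∈ s, G.Adj x y → y ∈ k) :
    k ∩ G.inessentialVerts s ⊆ G.inessentialVerts k := by
  rintro v ⟨hvk, -, M, hM, hvM⟩
  obtain ⟨K, hK⟩ := exists_isMaximumMatchingIn (G := G) k
  have hcM : ∀ ⦃x y⦄, M.Adj x y → (x ∈ k ↔ y ∈ k) := fun x y h =>
    ⟨fun hx => hk x hx y (hM.verts_subset h.snd_mem) (M.adj_sub h),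
      fun hy => hk y hy x (hM.verts_subset h.fst_mem) (M.adj_sub h.symm)⟩
  have hcK : ∀ ⦃x y⦄, K.Adj x y → (x ∈ k ↔ y ∈ k) := fun _ _ h =>
    iff_of_true (hK.verts_subset h.fst_mem) (hK.verts_subset h.snd_mem)
  refine ⟨hvk, K.splice M k, hM.splice hK hcM hcK ?_ ?_,
    fun h => hvM ((mem_splice_verts_of_mem hvk).mp h)⟩
  · exact splice_verts_subset.trans (union_subset hM.verts_subset (hK.verts_subset.trans hks))
  · rintro x (⟨hxK, hxk⟩ | ⟨-, hxk⟩)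
    · exact absurd (hK.verts_subset hxK) hxk
    · exact not_not.mp hxk

end SimpleGraph

open SimpleGraph

/-- Every connected component of the subgraph of a finite graph `G` induced on
`D(G)` is factor-critical. -/
theorem gallaiEdmonds_D_components_factorCritical {V : Type*} [Fintype V]
    (G : SimpleGraph V) (K : (G.induce (Dset G)).ConnectedComponent) :
    IsFactorCritical ((G.induce (Dset G)).induce K.supp) := by
  let ψ := (Embedding.induce (Dset G)).comp (Embedding.induce (G := G.induce (Dset G)) K.supp)
  have hψA : range ψ ⊆ (Aset G)ᶜ := by
    rintro _ ⟨x, rfl⟩ hA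
    exact hA.1 x.1.2
  have hψ : ∀ x ∈ range ψ, ∀ y ∈ (Aset G)ᶜ, G.Adj x y → y ∈ range ψ := by
    rintro _ ⟨x, rfl⟩ y hyA hxy
    have hyD : y ∈ Dset G := by_contra fun hyD => hyA ⟨hyD, _, x.1.2, hxy.symm⟩
    exact ⟨⟨⟨y, hyD⟩, K.mem_supp_of_adj_mem_supp x.2 hxy⟩, rfl⟩
  refine isFactorCritical_of_range_subset_inessentialVerts ψ K.connected_toSimpleGraph
    fun x hx => inter_inessentialVerts_subset hψA hψ ⟨hx, ?_⟩
  obtain ⟨x, rfl⟩ := hx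
  rw [inessentialVerts_compl_Aset]
  exact x.1.2
end

section
/- For every finite graph G, every maximum matching M of G, and every connected component K of the subgraph induced on D(G), exactly one vertex of K is not matched by M to another vertex of K (that vertex is either unmatched by M or matched by M to a vertex of A(G)); hence the restriction of M to K is a near-perfect matching of K. -/
/-!
A matching is encoded as an involution `f : V → V` whose two-element orbits are edges of `G`; its
unmatched vertices are the fixed points of `f`. Two involutions `f`, `g` generate a dihedral
action, and the orbit of a fixed point of `g` (the alternating path through it) contains either
one fixed point of each, or two of `g` and none of `f`. Exchanging `f` and `g` on such an orbit
shows that a maximum matching leaves at most one vertex unmatched in each component of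
`G[D(G)]`, and that isolating a vertex `a ∈ A(G)` only adds `a` to `D(G)`. Isolating the vertices
of `A(G)` one at a time therefore changes neither `G[D(G)]` nor, for a vertex of `D(G)`, whether
it is matched inside `D(G)`, and reduces the theorem to the case `A(G) = ∅`. There each component
`C` of `G[D(G)]` is closed under all matchings; a maximum matching missing a vertex of `C` misses
exactly one, so `|C|` is odd, and by parity every maximum matching misses exactly one vertex of
`C`.
-/

open Function Set SimpleGraph

namespace ZMod

theorem ncard_setOf_add_self_eq_of_odd {n : ℕ} (hn : Odd n) (c : ZMod n) :
    {k : ZMod n | k + k = c}.ncard = 1 := by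
  let u := ZMod.unitOfCoprime 2 (Nat.coprime_two_left.mpr hn)
  have hu : (u : ZMod n) = 2 := rfl
  refine ncard_eq_one.2 ⟨↑u⁻¹ * c, Set.ext fun k => ?_⟩
  rw [mem_ofPred_eq, mem_singleton_iff, ← two_mul, ← hu, Units.eq_inv_mul_iff_mul_eq]

theorem add_self_ne_one_of_even {n : ℕ} (hn : Even n) (k : ZMod n) : k + k ≠ 1 := by
  intro h
  have := congrArg (ZMod.castHom (even_iff_two_dvd.1 hn) (ZMod 2)) h
  rw [map_add, map_one, CharTwo.add_self_eq_zero] at this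
  exact zero_ne_one this

theorem ncard_setOf_add_self_eq_zero_of_even {n : ℕ} [NeZero n] (hn : Even n) :
    {k : ZMod n | k + k = 0}.ncard = 2 := by
  obtain ⟨h, rfl⟩ := hn
  have hh : 0 < h := by have := NeZero.pos (h + h); omega
  have hsol : {k : ZMod (h + h) | k + k = 0} = {0, (h : ZMod (h + h))} := by
    ext k
    rw [← ZMod.natCast_zmod_val k]
    have hk := ZMod.val_lt k
    simp only [mem_ofPred_eq, mem_insert_iff, mem_singleton_iff, ← Nat.cast_add,
      ZMod.natCast_eq_zero_iff, ZMod.natCast_eq_natCast_iff', Nat.mod_eq_of_lt hk,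
      Nat.mod_eq_of_lt (by omega : h < h + h)]
    constructor
    · rintro ⟨c, hc⟩
      have hc2 : c < 2 := by nlinarith
      interval_cases c
      · exact .inl ⟨0, by omega⟩
      · exact .inr (by omega)
    · rintro (⟨c, hc⟩ | hkh)
      · exact ⟨2 * c, by rw [hc]; ring⟩
      · exact ⟨1, by omega⟩
  rw [hsol, ncard_pair]
  rw [Ne, eq_comm, ZMod.natCast_eq_zero_iff]
  exact Nat.not_dvd_of_pos_of_lt hh (by omega)

end ZMod

theorem Function.Injective.range_inter_fixedPoints {α β : Type*} {φ : α → β} (hφ : Injective φ)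
    {f : β → β} {h : α → α} (hfh : ∀ k, f (φ k) = φ (h k)) :
    range φ ∩ fixedPoints f = φ '' fixedPoints h := by
  ext x
  constructor
  · rintro ⟨⟨k, rfl⟩, hk⟩
    exact ⟨k, hφ (by rw [← hfh]; exact hk), rfl⟩
  · rintro ⟨k, hk, rfl⟩
    exact ⟨mem_range_self k, by rw [mem_fixedPoints, IsFixedPt, hfh, hk.eq]⟩

section Piecewise

variable {α : Type*} (O : Set α) (f g : α → α) [∀ x, Decidable (x ∈ O)]

theorem Set.fixedPoints_piecewise :
    fixedPoints (O.piecewise f g) = O ∩ fixedPoints f ∪ fixedPoints g \ O := by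
  ext x
  by_cases hx : x ∈ O <;> simp [hx, IsFixedPt]

theorem Set.ncard_fixedPoints_piecewise_add [Finite α] :
    (fixedPoints (O.piecewise f g)).ncard + (O ∩ fixedPoints g).ncard =
      (fixedPoints g).ncard + (O ∩ fixedPoints f).ncard := by
  have hdisj : Disjoint (O ∩ fixedPoints f) (fixedPoints g \ O) :=
    disjoint_sdiff_right.mono_left inter_subset_left
  rw [fixedPoints_piecewise, ncard_union_eq hdisj, inter_comm O (fixedPoints g),
    ← ncard_inter_add_ncard_sdiff_eq_ncard (fixedPoints g) O]
  ring

end Piecewise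

namespace Function.Involutive

variable {α : Type*} {f g : α → α}

theorem piecewise {O : Set α} [∀ x, Decidable (x ∈ O)] (hf : Involutive f) (hg : Involutive g)
    (hfO : MapsTo f O O) (hgO : MapsTo g O O) : Involutive (O.piecewise f g) := by
  intro x
  by_cases hx : x ∈ O
  · rw [piecewise_eq_of_mem _ _ _ hx, piecewise_eq_of_mem _ _ _ (hfO hx), hf]
  · have hgx : g x ∉ O := fun h => hx (hg x ▸ hgO h)
    rw [piecewise_eq_of_notMem _ _ _ hx, piecewise_eq_of_notMem _ _ _ hgx, hg]

theorem ncard_modEq_ncard_inter_fixedPoints [Finite α] (hf : Involutive f) {S : Set α}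
    (hS : MapsTo f S S) : S.ncard ≡ (S ∩ fixedPoints f).ncard [MOD 2] := by
  classical
  have := Fintype.ofFinite α
  let r : Function.End S := hS.restrict f S S
  have hr : r ^ 2 ^ 1 = 1 := funext fun x => Subtype.ext (hf x)
  have hfix : S ∩ fixedPoints f = Subtype.val '' fixedPoints r := by
    ext x
    simp only [mem_inter_iff, mem_fixedPoints, mem_image, Subtype.exists, exists_and_right,
      exists_eq_right]
    exact ⟨fun ⟨hx, h⟩ => ⟨hx, Subtype.ext h⟩, fun ⟨hx, h⟩ => ⟨hx, congrArg Subtype.val h⟩⟩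
  rw [hfix, ncard_image_of_injective _ Subtype.val_injective, ← Nat.card_coe_set_eq,
    ← Nat.card_coe_set_eq, Nat.card_eq_fintype_card, Nat.card_eq_fintype_card]
  exact Equiv.Perm.card_fixedPoints_modEq hr

/-- The orbit of `v` under `σ = f ∘ g` is a copy of `ZMod d` on which `g` and `f` act as
`k ↦ -k` and `k ↦ 1 - k`, so their fixed points there are the solutions of `2k = 0` and
`2k = 1`. -/
theorem exists_orbit_ncard_fixedPoints [Finite α] (hf : Involutive f) (hg : Involutive g)
    {v : α} (hv : g v = v) :
    ∃ O : Set α, v ∈ O ∧ MapsTo f O O ∧ MapsTo g O O ∧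
      ((O ∩ fixedPoints f).ncard = 1 ∧ (O ∩ fixedPoints g).ncard = 1 ∨
        O ∩ fixedPoints f = ∅ ∧ (O ∩ fixedPoints g).ncard = 2) := by
  set F := hf.toPerm
  set G := hg.toPerm
  set σ := F * G
  have hGσ : SemiconjBy G σ σ⁻¹ := by
    have hF : F⁻¹ = F := hf.toPerm_symm
    have hG : G⁻¹ = G := hg.toPerm_symm
    simp only [SemiconjBy, σ, mul_inv_rev, hF, hG, mul_assoc]
  have hg_zpow (n : ℤ) : g ((σ ^ n) v) = (σ ^ (-n)) v := by
    have := congrArg (· v) (hGσ.zpow_right n).eq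
    simpa [G, zpow_neg, hv] using this
  have hf_zpow (n : ℤ) : f ((σ ^ n) v) = (σ ^ (1 - n)) v := by
    rw [zpow_sub, zpow_one, ← zpow_neg, Equiv.Perm.mul_apply, ← hg_zpow]
    simp [σ, F, G, hg _]
  set d := minimalPeriod (σ • ·) v
  let φ : ZMod d → α := fun k => (MulAction.orbitZPowersEquiv σ v).symm k
  have hφ_inj : Injective φ := Subtype.val_injective.comp (Equiv.injective _)
  have hφ (n : ℤ) : φ n = (σ ^ n) v :=
    congrArg Subtype.val (MulAction.orbitZPowersEquiv_symm_apply' σ v n)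
  have hgφ (k : ZMod d) : g (φ k) = φ (-k) := by
    obtain ⟨n, rfl⟩ := ZMod.intCast_surjective k
    rw [hφ, hg_zpow, ← Int.cast_neg, hφ]
  have hfφ (k : ZMod d) : f (φ k) = φ (1 - k) := by
    obtain ⟨n, rfl⟩ := ZMod.intCast_surjective k
    rw [hφ, hf_zpow, ← hφ]
    push_cast; rfl
  refine ⟨range φ, ⟨0, by simpa using hφ 0⟩, ?_, ?_, ?_⟩
  · rintro _ ⟨k, rfl⟩; exact ⟨1 - k, (hfφ k).symm⟩
  · rintro _ ⟨k, rfl⟩; exact ⟨-k, (hgφ k).symm⟩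
  have hfix_g : fixedPoints (fun k : ZMod d => -k) = {k | k + k = 0} := by
    ext k; exact neg_eq_iff_add_eq_zero
  have hfix_f : fixedPoints (fun k : ZMod d => 1 - k) = {k | k + k = 1} := by
    ext k; exact sub_eq_iff_eq_add.trans eq_comm
  rw [hφ_inj.range_inter_fixedPoints hgφ, hφ_inj.range_inter_fixedPoints hfφ, hfix_g, hfix_f,
    ncard_image_of_injective _ hφ_inj, ncard_image_of_injective _ hφ_inj]
  rcases Nat.even_or_odd d with hd | hd
  · right
    refine ⟨?_, ZMod.ncard_setOf_add_self_eq_zero_of_even hd⟩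
    simp [ZMod.add_self_ne_one_of_even hd]
  · left
    exact ⟨ZMod.ncard_setOf_add_self_eq_of_odd hd 1, ZMod.ncard_setOf_add_self_eq_of_odd hd 0⟩

end Function.Involutive

namespace SimpleGraph

variable {V : Type*} {G : SimpleGraph V} {f g m : V → V} {a u v : V}

theorem spanningCoe_induce_adj {s : Set V} {x y : V} :
    (G.induce s).spanningCoe.Adj x y ↔ G.Adj x y ∧ x ∈ s ∧ y ∈ s := by
  simp

theorem reachable_spanningCoe_induce_iff {s : Set V} {x y : V} (hx : x ∈ s) :
    (G.induce s).spanningCoe.Reachable x y ↔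
      ∃ hy : y ∈ s, (G.induce s).Reachable ⟨x, hx⟩ ⟨y, hy⟩ := by
  constructor
  · rintro ⟨p⟩
    induction p with
    | nil => exact ⟨hx, .rfl⟩
    | cons hxz _ ih =>
      obtain ⟨hxz, -, hz⟩ := spanningCoe_induce_adj.1 hxz
      obtain ⟨hy, hzy⟩ := ih hz
      exact ⟨hy, (induce_adj.2 hxz : (G.induce s).Adj ⟨_, hx⟩ ⟨_, hz⟩).reachable.trans hzy⟩
  · rintro ⟨hy, h⟩
    exact h.map (Embedding.map (Embedding.subtype s) _).toHom

def IsMatchingInvolution (G : SimpleGraph V) (f : V → V) : Prop :=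
  Involutive f ∧ ∀ x, f x ≠ x → G.Adj x (f x)

theorem isMatchingInvolution_id : G.IsMatchingInvolution id :=
  ⟨fun _ => rfl, fun _ h => absurd rfl h⟩

theorem isMatchingInvolution_swap [DecidableEq V] (huv : G.Adj u v) :
    G.IsMatchingInvolution (Equiv.swap u v) := by
  refine ⟨Equiv.swap_apply_self u v, fun x hx => ?_⟩
  rcases eq_or_ne x u with rfl | hxu
  · simpa using huv
  rcases eq_or_ne x v with rfl | hxv
  · simpa using huv.symm
  · exact absurd (Equiv.swap_apply_of_ne_of_ne hxu hxv) hx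

theorem isMatchingInvolution_deleteIncidenceSet_iff :
    (G.deleteIncidenceSet a).IsMatchingInvolution f ↔ G.IsMatchingInvolution f ∧ f a = a := by
  simp only [IsMatchingInvolution, deleteIncidenceSet_adj]
  constructor
  · rintro ⟨hf, hadj⟩
    exact ⟨⟨hf, fun x hx => (hadj x hx).1⟩, by_contra fun ha => (hadj a ha).2.1 rfl⟩
  · rintro ⟨⟨hf, hadj⟩, ha⟩
    refine ⟨hf, fun x hx => ⟨hadj x hx, fun hxa => hx (hxa ▸ ha), fun hfx => ?_⟩⟩
    have hxa : x = a := by rw [← hf x, hfx, ha]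
    exact hx (hfx.trans hxa.symm)

namespace IsMatchingInvolution

theorem piecewise {O : Set V} [∀ x, Decidable (x ∈ O)] (hf : G.IsMatchingInvolution f)
    (hg : G.IsMatchingInvolution g) (hfO : MapsTo f O O) (hgO : MapsTo g O O) :
    G.IsMatchingInvolution (O.piecewise f g) := by
  refine ⟨hf.1.piecewise hg.1 hfO hgO, fun x hx => ?_⟩
  by_cases hxO : x ∈ O
  · rw [piecewise_eq_of_mem _ _ _ hxO] at hx ⊢; exact hf.2 x hx
  · rw [piecewise_eq_of_notMem _ _ _ hxO] at hx ⊢; exact hg.2 x hx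

def toSubgraph (hf : G.IsMatchingInvolution f) : G.Subgraph where
  verts := (fixedPoints f)ᶜ
  Adj x y := f x = y ∧ x ≠ y
  adj_sub := by rintro x _ ⟨rfl, hx⟩; exact hf.2 x (Ne.symm hx)
  edge_vert := by rintro x _ ⟨rfl, hx⟩; exact Ne.symm hx
  symm := ⟨by rintro x _ ⟨rfl, hx⟩; exact ⟨hf.1 x, Ne.symm hx⟩⟩

theorem isMatching_toSubgraph (hf : G.IsMatchingInvolution f) : hf.toSubgraph.IsMatching :=
  fun x hx => ⟨f x, ⟨rfl, Ne.symm hx⟩, fun _ h => h.1.symm⟩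

end IsMatchingInvolution

theorem Subgraph.IsMatching.exists_toSubgraph_eq {M : G.Subgraph} (hM : M.IsMatching) :
    ∃ f, ∃ hf : G.IsMatchingInvolution f, hf.toSubgraph = M := by
  classical
  let f v := if hv : v ∈ M.verts then (hM hv).choose else v
  have hf_adj {v} (hv : v ∈ M.verts) : M.Adj v (f v) := by
    simpa only [f, dif_pos hv] using (hM hv).choose_spec.1
  have hf_eq {v w} (h : M.Adj v w) : f v = w := hM.eq_of_adj_left (hf_adj h.fst_mem) h
  have hf_fix {v} (hv : v ∉ M.verts) : f v = v := dif_neg hv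
  have hf_mem {v} : f v ≠ v ↔ v ∈ M.verts :=
    ⟨not_imp_comm.1 hf_fix, fun hv => (hf_adj hv).ne.symm⟩
  have hf : G.IsMatchingInvolution f := by
    refine ⟨fun v => ?_, fun v hv => M.adj_sub (hf_adj (hf_mem.1 hv))⟩
    by_cases hv : v ∈ M.verts
    · exact hf_eq (hf_adj hv).symm
    · rw [hf_fix hv, hf_fix hv]
  refine ⟨f, hf, Subgraph.ext (Set.ext fun v => hf_mem) ?_⟩
  ext x y
  exact ⟨fun ⟨hxy, hne⟩ => hxy ▸ hf_adj (hf_mem.1 (hxy ▸ hne.symm)),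
    fun h => ⟨hf_eq h, h.ne⟩⟩

def IsMaximumMatchingInvolution (G : SimpleGraph V) (f : V → V) : Prop :=
  G.IsMatchingInvolution f ∧
    ∀ g, G.IsMatchingInvolution g → (fixedPoints f).ncard ≤ (fixedPoints g).ncard

theorem IsMaximumMatchingInvolution.of_ncard_le (hm : G.IsMaximumMatchingInvolution m)
    (hf : G.IsMatchingInvolution f) (h : (fixedPoints f).ncard ≤ (fixedPoints m).ncard) :
    G.IsMaximumMatchingInvolution f :=
  ⟨hf, fun g hg => h.trans (hm.2 g hg)⟩

/-- `G[D(G)]`, as a graph on all of `V`. -/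
abbrev dsetGraph (G : SimpleGraph V) : SimpleGraph V := (G.induce (Dset G)).spanningCoe

theorem IsMatchingInvolution.not_exists_adj_toSubgraph_iff (hm : G.IsMatchingInvolution m)
    {s : Set V} {K : (G.induce s).ConnectedComponent} {v : s} (hv : v ∈ K.supp) :
    (¬ ∃ w : s, w ∈ K.supp ∧ hm.toSubgraph.Adj v w) ↔ (m v = v ∨ m v ∉ s) := by
  constructor
  · intro h
    by_contra! hmv
    exact h ⟨⟨m v, hmv.2⟩, K.mem_supp_of_adj_mem_supp hv (hm.2 v hmv.1), rfl, hmv.1.symm⟩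
  · rintro (hmv | hmv) ⟨w, -, hmvw, hne⟩
    · exact hne (hmv.symm.trans hmvw)
    · exact hmv (hmvw ▸ w.2)

variable [Finite V]

theorem IsMatchingInvolution.exists_fixedPoints_eq_diff_pair (hf : G.IsMatchingInvolution f)
    (huv : G.Adj u v) (hu : f u = u) (hv : f v = v) :
    ∃ g, G.IsMatchingInvolution g ∧ fixedPoints g = fixedPoints f \ {u, v} ∧
      (fixedPoints g).ncard + 2 = (fixedPoints f).ncard := by
  classical
  have hpair : MapsTo f {u, v} {u, v} := by rintro x (rfl | rfl) <;> simp [hu, hv]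
  have hswap : MapsTo (Equiv.swap u v) {u, v} {u, v} := by rintro x (rfl | rfl) <;> simp
  have hswap_fix : {u, v} ∩ fixedPoints (Equiv.swap u v) = ∅ := by
    ext x
    simp only [mem_inter_iff, mem_insert_iff, mem_singleton_iff, mem_fixedPoints, IsFixedPt,
      mem_empty_iff_false, iff_false, not_and]
    rintro (rfl | rfl) <;> simp [huv.ne, huv.ne.symm]
  have hfix : fixedPoints (({u, v} : Set V).piecewise (Equiv.swap u v) f) =
      fixedPoints f \ {u, v} := by
    rw [fixedPoints_piecewise, hswap_fix, empty_union]
  have hsub : {u, v} ⊆ fixedPoints f := by rintro x (rfl | rfl) <;> assumption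
  refine ⟨_, (isMatchingInvolution_swap huv).piecewise hf hswap hpair, hfix, ?_⟩
  rw [hfix, ← ncard_sdiff_add_ncard_of_subset hsub, ncard_pair huv.ne]

theorem Subgraph.IsMatching.ncard_verts {M : G.Subgraph} (hM : M.IsMatching) :
    M.verts.ncard = 2 * M.edgeSet.ncard := by
  have := Fintype.ofFinite M.edgeSet
  have hfiber (e : M.edgeSet) : Nat.card {x // hM.toEdge x = e} = 2 := by
    obtain ⟨e, he⟩ := e
    induction e using Sym2.ind with | _ x y => ?_
    change Nat.card (hM.toEdge ⁻¹' {⟨s(x, y), he⟩}) = 2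
    rw [Nat.card_coe_set_eq, hM.toEdge_preimage_singleton he, ncard_pair]
    exact fun h => he.ne (congrArg Subtype.val h)
  rw [← Nat.card_coe_set_eq, ← Nat.card_coe_set_eq,
    ← Nat.card_congr (Equiv.sigmaFiberEquiv hM.toEdge), Nat.card_sigma]
  simp [hfiber, mul_comm]

theorem IsMatchingInvolution.ncard_fixedPoints_add_two_mul (hf : G.IsMatchingInvolution f) :
    (fixedPoints f).ncard + 2 * hf.toSubgraph.edgeSet.ncard = Nat.card V := by
  rw [← hf.isMatching_toSubgraph.ncard_verts]
  exact ncard_add_ncard_compl (fixedPoints f)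

theorem exists_isMaximumMatchingInvolution (G : SimpleGraph V) :
    ∃ f, G.IsMaximumMatchingInvolution f := by
  obtain ⟨f, hf, hmin⟩ := Set.exists_min_image {f | G.IsMatchingInvolution f}
    (fun f => (fixedPoints f).ncard) (Set.toFinite _) ⟨id, isMatchingInvolution_id⟩
  exact ⟨f, hf, hmin⟩

theorem isMaximumMatching_toSubgraph_iff (hf : G.IsMatchingInvolution f) :
    IsMaximumMatching G hf.toSubgraph ↔ G.IsMaximumMatchingInvolution f := by
  refine ⟨fun hmax => ⟨hf, fun g hg => ?_⟩, fun hmax => ⟨hf.isMatching_toSubgraph, ?_⟩⟩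
  · have := hmax.2 _ hg.isMatching_toSubgraph
    have := hf.ncard_fixedPoints_add_two_mul
    have := hg.ncard_fixedPoints_add_two_mul
    omega
  · rintro _ hM'
    obtain ⟨g, hg, rfl⟩ := hM'.exists_toSubgraph_eq
    have := hmax.2 g hg
    have := hf.ncard_fixedPoints_add_two_mul
    have := hg.ncard_fixedPoints_add_two_mul
    omega

theorem mem_Dset_iff : v ∈ Dset G ↔ ∃ f, G.IsMaximumMatchingInvolution f ∧ f v = v := by
  constructor
  · rintro ⟨M, hM, hv⟩
    obtain ⟨f, hf, rfl⟩ := hM.1.exists_toSubgraph_eq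
    exact ⟨f, (isMaximumMatching_toSubgraph_iff hf).1 hM, not_not.1 hv⟩
  · rintro ⟨f, hf, hv⟩
    exact ⟨hf.1.toSubgraph, (isMaximumMatching_toSubgraph_iff hf.1).2 hf, not_not.2 hv⟩

namespace IsMaximumMatchingInvolution

theorem not_adj (hm : G.IsMaximumMatchingInvolution m) (hu : m u = u) (hv : m v = v) :
    ¬ G.Adj u v := fun huv => by
  obtain ⟨g, hg, -, hcount⟩ := hm.1.exists_fixedPoints_eq_diff_pair huv hu hv
  have := hm.2 g hg
  omega

/-- Unmatched counts all have the parity of `Nat.card V`, and `f` is not maximum since it misses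
`a ∉ D(G)`. -/
theorem ncard_fixedPoints_add_two_le (hm : G.IsMaximumMatchingInvolution m) (ha : a ∉ Dset G)
    (hf : G.IsMatchingInvolution f) (hfa : f a = a) :
    (fixedPoints m).ncard + 2 ≤ (fixedPoints f).ncard := by
  have hle := hm.2 f hf
  have hne : (fixedPoints f).ncard ≠ (fixedPoints m).ncard := fun h =>
    ha (mem_Dset_iff.2 ⟨f, hm.of_ncard_le hf h.le, hfa⟩)
  have hm2 := hm.1.1.ncard_modEq_ncard_inter_fixedPoints (mapsTo_univ m univ)
  have hf2 := hf.1.ncard_modEq_ncard_inter_fixedPoints (mapsTo_univ f univ)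
  rw [univ_inter] at hm2 hf2
  have := hm2.symm.trans hf2
  unfold Nat.ModEq at this
  omega

theorem exists_deleteIncidenceSet (hm : G.IsMaximumMatchingInvolution m) (ha : a ∉ Dset G) :
    ∃ m', (G.deleteIncidenceSet a).IsMaximumMatchingInvolution m' ∧ m' (m a) = m a ∧
      ∀ x, x ≠ a → x ≠ m a → m' x = m x := by
  classical
  have hma : m a ≠ a := fun h => ha (mem_Dset_iff.2 ⟨m, hm, h⟩)
  set O : Set V := {a, m a}
  have hmO : MapsTo m O O := by rintro x (rfl | rfl) <;> simp [O, hm.1.1 _]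
  have hm' : G.IsMatchingInvolution (O.piecewise id m) :=
    isMatchingInvolution_id.piecewise hm.1 (mapsTo_id O) hmO
  have hOm : O ∩ fixedPoints m = ∅ := by
    ext x
    simp only [O, mem_inter_iff, mem_insert_iff, mem_singleton_iff, mem_fixedPoints, IsFixedPt,
      mem_empty_iff_false, iff_false, not_and]
    rintro (rfl | rfl)
    · exact hma
    · rw [hm.1.1]; exact hma.symm
  have hcount := ncard_fixedPoints_piecewise_add O id m
  rw [hOm, fixedPoints_id, inter_univ, ncard_empty, ncard_pair hma.symm] at hcount
  refine ⟨O.piecewise id m, ⟨isMatchingInvolution_deleteIncidenceSet_iff.2 ⟨hm', by simp [O]⟩,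
    fun g hg => ?_⟩, by simp [O], fun x hxa hxma => by simp [O, hxa, hxma]⟩
  have hg' := isMatchingInvolution_deleteIncidenceSet_iff.1 hg
  have := hm.ncard_fixedPoints_add_two_le ha hg'.1 hg'.2
  omega

end IsMaximumMatchingInvolution

/-- Compare a maximum matching `m` of `G - a` missing `v` with a maximum matching `n` of `G`
missing a neighbour `u ∈ D(G)` of `a`, on the `⟨n, m⟩`-orbit of `v`. -/
theorem mem_Dset_of_mem_Dset_deleteIncidenceSet (hu : u ∈ Dset G) (hau : G.Adj a u)
    (hv : v ∈ Dset (G.deleteIncidenceSet a)) (hva : v ≠ a) : v ∈ Dset G := by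
  classical
  by_contra hvG
  obtain ⟨n, hn, hnu⟩ := mem_Dset_iff.1 hu
  obtain ⟨m, hm, hmv⟩ := mem_Dset_iff.1 hv
  obtain ⟨hmG, hma⟩ := isMatchingInvolution_deleteIncidenceSet_iff.1 hm.1
  have hnv : n v ≠ v := fun h => hvG (mem_Dset_iff.2 ⟨n, hn, h⟩)
  obtain ⟨O, hvO, hnO, hmO, hcount⟩ := hn.1.1.exists_orbit_ncard_fixedPoints hm.1.1 hmv
  have hmn := ncard_fixedPoints_piecewise_add O m n
  have hmn_match := hmG.piecewise hn.1 hmO hnO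
  have hmn_v : O.piecewise m n v = v := by simp [hvO, hmv]
  rcases hcount with ⟨hOn, hOm⟩ | ⟨hOn, hOm⟩
  · exact hvG (mem_Dset_iff.2 ⟨_, hn.of_ncard_le hmn_match (by omega), hmn_v⟩)
  rw [hOn, ncard_empty] at hmn
  by_cases haO : a ∈ O
  · -- `m` on `O` and `n` off `O` misses `a` and `u`; add the edge `au`
    have huO : u ∉ O := fun huO => (hOn ▸ ⟨huO, hnu⟩ : u ∈ (∅ : Set V))
    obtain ⟨g, hg, hgfix, hgcount⟩ := hmn_match.exists_fixedPoints_eq_diff_pair hau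
      (by simp [haO, hma]) (by simp [huO, hnu])
    have hvu : v ≠ u := fun h => hnv (h ▸ hnu)
    have hgv : v ∈ fixedPoints g := by
      rw [hgfix]
      exact ⟨hmn_v, by simp [hva, hvu]⟩
    exact hvG (mem_Dset_iff.2 ⟨g, hn.of_ncard_le hg (by omega), hgv⟩)
  · -- `n` on `O` and `m` off `O` is a matching of `G - a` better than `m`
    have hnm := ncard_fixedPoints_piecewise_add O n m
    have hnm_match : (G.deleteIncidenceSet a).IsMatchingInvolution (O.piecewise n m) :=
      isMatchingInvolution_deleteIncidenceSet_iff.2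
        ⟨hn.1.piecewise hmG hnO hmO, by simp [haO, hma]⟩
    have := hm.2 _ hnm_match
    rw [hOn, ncard_empty] at hnm
    omega

theorem Dset_deleteIncidenceSet (ha : a ∈ Aset G) :
    Dset (G.deleteIncidenceSet a) = insert a (Dset G) := by
  obtain ⟨ha, u, hu, hau⟩ := ha
  ext v
  constructor
  · intro hv
    rcases eq_or_ne v a with rfl | hva
    · exact mem_insert _ _
    · exact mem_insert_of_mem _ (mem_Dset_of_mem_Dset_deleteIncidenceSet hu hau hv hva)
  · rintro (rfl | hv)
    · obtain ⟨f, hf⟩ := exists_isMaximumMatchingInvolution (G.deleteIncidenceSet v)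
      exact mem_Dset_iff.2 ⟨f, hf, (isMatchingInvolution_deleteIncidenceSet_iff.1 hf.1).2⟩
    · obtain ⟨m, hm, hmv⟩ := mem_Dset_iff.1 hv
      obtain ⟨m', hm', -, hm'_eq⟩ := hm.exists_deleteIncidenceSet ha
      have hva : v ≠ a := fun h => ha (h ▸ hv)
      have hvma : v ≠ m a := fun h => hva (by rw [← hmv, h, hm.1.1])
      exact mem_Dset_iff.2 ⟨m', hm', by rw [hm'_eq v hva hvma, hmv]⟩

theorem dsetGraph_deleteIncidenceSet (ha : a ∈ Aset G) :
    (G.deleteIncidenceSet a).dsetGraph = G.dsetGraph := by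
  have hne : ∀ x ∈ Dset G, x ≠ a := fun x hx h => ha.1 (h ▸ hx)
  ext x y
  simp only [spanningCoe_induce_adj, deleteIncidenceSet_adj, Dset_deleteIncidenceSet ha,
    mem_insert_iff]
  constructor
  · rintro ⟨⟨hxy, hxa, hya⟩, hx, hy⟩
    exact ⟨hxy, hx.resolve_left hxa, hy.resolve_left hya⟩
  · rintro ⟨hxy, hx, hy⟩
    exact ⟨⟨hxy, hne x hx, hne y hy⟩, .inr hx, .inr hy⟩

/-- If the next vertex `w` of the walk is matched, take a maximum matching `n` missing it: on the
`⟨m, n⟩`-orbit of `w`, `m` misses at most one vertex, and switching to `n` there gives a maximum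
matching missing `w` and one of `u`, `v`. -/
theorem IsMaximumMatchingInvolution.eq_of_walk {u v : V} (p : G.dsetGraph.Walk u v)
    (hm : G.IsMaximumMatchingInvolution m) (hu : m u = u) (hv : m v = v) : u = v := by
  classical
  induction p generalizing m with
  | nil => rfl
  | @cons u w v huw q ih =>
    obtain ⟨huw, -, hw⟩ := spanningCoe_induce_adj.1 huw
    have hmw : m w ≠ w := fun hmw => hm.not_adj hu hmw huw
    obtain ⟨n, hn, hnw⟩ := mem_Dset_iff.1 hw
    obtain ⟨O, hwO, hmO, hnO, hcount⟩ := hm.1.1.exists_orbit_ncard_fixedPoints hn.1.1 hnw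
    rcases hcount with ⟨hOm, hOn⟩ | ⟨hOm, hOn⟩
    · have ht : G.IsMaximumMatchingInvolution (O.piecewise n m) := by
        have := ncard_fixedPoints_piecewise_add O n m
        exact hm.of_ncard_le (hn.1.piecewise hm.1 hnO hmO) (by omega)
      have htw : O.piecewise n m w = w := by simp [hwO, hnw]
      by_cases huO : u ∈ O
      · by_cases hvO : v ∈ O
        · exact (ncard_le_one_iff (toFinite _)).1 hOm.le ⟨huO, hu⟩ ⟨hvO, hv⟩
        · exact absurd (ih ht htw (by simp [hvO, hv])) (fun hwv => hmw (hwv ▸ hv))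
      · exact absurd huw (ht.not_adj (by simp [huO, hu]) htw)
    · have := hn.2 _ (hm.1.piecewise hn.1 hmO hnO)
      have := ncard_fixedPoints_piecewise_add O m n
      rw [hOm, ncard_empty] at this
      omega

theorem existsUnique_of_Aset_eq_empty (hA : Aset G = ∅) (hm : G.IsMaximumMatchingInvolution m)
    {v₀ : V} (hv₀ : v₀ ∈ Dset G) :
    ∃! v, G.dsetGraph.Reachable v₀ v ∧ (m v = v ∨ m v ∉ Dset G) := by
  have hclosed (x : V) (hx : x ∈ Dset G) (y : V) (hxy : G.Adj x y) : y ∈ Dset G := by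
    by_contra hy
    exact (hA ▸ (⟨hy, x, hx, hxy.symm⟩ : y ∈ Aset G) : y ∈ (∅ : Set V))
  set C := {x | G.dsetGraph.Reachable v₀ x}
  have hCD (x : V) (hx : x ∈ C) : x ∈ Dset G := ((reachable_spanningCoe_induce_iff hv₀).1 hx).1
  have hC (f : V → V) (hf : G.IsMatchingInvolution f) : MapsTo f C C := by
    intro x hx
    by_cases hfx : f x = x
    · rwa [hfx]
    · have hxfx := hf.2 x hfx
      exact hx.trans
        (spanningCoe_induce_adj.2 ⟨hxfx, hCD x hx, hclosed x (hCD x hx) _ hxfx⟩).reachable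
  obtain ⟨n, hn, hnv₀⟩ := mem_Dset_iff.1 hv₀
  have hCn : C ∩ fixedPoints n = {v₀} := by
    ext x
    constructor
    · rintro ⟨⟨p⟩, hx⟩
      exact (hn.eq_of_walk p hnv₀ hx).symm
    · rintro rfl
      exact ⟨.rfl, hnv₀⟩
  -- `C` is odd since `n` misses exactly one of its vertices, so `m` misses some vertex of `C`
  have hodd := (hn.1.1.ncard_modEq_ncard_inter_fixedPoints (hC n hn.1)).symm.trans
    (hm.1.1.ncard_modEq_ncard_inter_fixedPoints (hC m hm.1))
  rw [hCn, ncard_singleton] at hodd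
  obtain ⟨v, hvC, hvm⟩ := nonempty_of_ncard_ne_zero fun h => by
    rw [h] at hodd
    exact absurd hodd (by decide)
  refine ⟨v, ⟨hvC, .inl hvm⟩, fun w ⟨hwC, hw⟩ => ?_⟩
  obtain ⟨p⟩ := hwC.symm.trans hvC
  exact hm.eq_of_walk p (hw.resolve_right fun h => h (hCD _ (hC m hm.1 hwC))) hvm

theorem existsUnique_reachable_unmatched (hm : G.IsMaximumMatchingInvolution m) {v₀ : V}
    (hv₀ : v₀ ∈ Dset G) : ∃! v, G.dsetGraph.Reachable v₀ v ∧ (m v = v ∨ m v ∉ Dset G) := by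
  induction G using WellFoundedLT.induction generalizing m with
  | _ G ih =>
  rcases (Aset G).eq_empty_or_nonempty with hA | ⟨a, haA⟩
  · exact existsUnique_of_Aset_eq_empty hA hm hv₀
  obtain ⟨u, -, hau⟩ := haA.2
  have hlt : G.deleteIncidenceSet a < G := by
    refine lt_of_le_of_ne (deleteIncidenceSet_le G a) fun h => ?_
    have : (G.deleteIncidenceSet a).Adj a u := by rw [h]; exact hau
    exact (deleteIncidenceSet_adj.1 this).2.1 rfl
  obtain ⟨m', hm', hm'ma, hm'_eq⟩ := hm.exists_deleteIncidenceSet haA.1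
  have hD := Dset_deleteIncidenceSet haA
  have key := ih _ hlt hm' (hD ▸ mem_insert_of_mem a hv₀)
  rw [dsetGraph_deleteIncidenceSet haA] at key
  refine (existsUnique_congr fun v => and_congr_right fun hv => ?_).1 key
  have hva : v ≠ a := fun h => haA.1 (h ▸ ((reachable_spanningCoe_induce_iff hv₀).1 hv).1)
  rw [hD, mem_insert_iff]
  by_cases hvma : v = m a
  · subst hvma
    simp [hm'ma, hm.1.1 a, haA.1]
  · have hmva : m v ≠ a := fun h => hvma (by rw [← h, hm.1.1])
    rw [hm'_eq v hva hvma]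
    simp [hmva]

end SimpleGraph

/-- For every finite graph `G`, every maximum matching `M` of `G`, and every
connected component `K` of the subgraph induced on `D(G)`, exactly one vertex of
`K` is not matched by `M` to another vertex of `K`; moreover that vertex is
either unmatched by `M` or matched by `M` to a vertex of `A(G)`.  Hence the
restriction of `M` to `K` is a near-perfect matching of `K`. -/
theorem gallaiEdmonds_D_components_nearPerfect {V : Type*} [Fintype V]
    (G : SimpleGraph V) (M : G.Subgraph) (hM : IsMaximumMatching G M)
    (K : (G.induce (Dset G)).ConnectedComponent) :
    (∃! v : Dset G, v ∈ K.supp ∧ ¬ ∃ w : Dset G, w ∈ K.supp ∧ M.Adj ↑v ↑w) ∧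
    (∀ v : Dset G, (v ∈ K.supp ∧ ¬ ∃ w : Dset G, w ∈ K.supp ∧ M.Adj ↑v ↑w) →
      ((v : V) ∉ M.verts ∨ ∃ a ∈ Aset G, M.Adj ↑v a)) := by
  obtain ⟨m, hm, rfl⟩ := hM.1.exists_toSubgraph_eq
  obtain ⟨v₀, rfl⟩ := K.exists_rep
  have hK (v : Dset G) :
      v ∈ ((G.induce (Dset G)).connectedComponentMk v₀).supp ↔ G.dsetGraph.Reachable v₀ v := by
    rw [ConnectedComponent.mem_supp_iff, ConnectedComponent.eq,
      reachable_spanningCoe_induce_iff v₀.2]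
    exact ⟨fun h => ⟨v.2, h.symm⟩, fun ⟨_, h⟩ => h.symm⟩
  obtain ⟨v, ⟨hv, hvm⟩, huniq⟩ :=
    existsUnique_reachable_unmatched ((isMaximumMatching_toSubgraph_iff hm).1 hM) v₀.2
  have hvK := (hK ⟨v, ((reachable_spanningCoe_induce_iff v₀.2).1 hv).1⟩).2 hv
  refine ⟨⟨_, ⟨hvK, (hm.not_exists_adj_toSubgraph_iff hvK).2 hvm⟩, fun w ⟨hwK, hw⟩ =>
    Subtype.ext (huniq w ⟨(hK w).1 hwK, (hm.not_exists_adj_toSubgraph_iff hwK).1 hw⟩)⟩,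
    fun w ⟨hwK, hw⟩ => ?_⟩
  rcases (hm.not_exists_adj_toSubgraph_iff hwK).1 hw with hmw | hmw
  · exact .inl (not_not.2 hmw)
  · have hne : m w ≠ w := fun h => hmw (by rw [h]; exact w.2)
    exact .inr ⟨m w, ⟨hmw, w, w.2, (hm.2 w hne).symm⟩, rfl, hne.symm⟩
end

section
/- Let H be a finite directed graph with distinguished vertices s and t. Construct an undirected graph G and a matching M as follows: for each v ∈ V(H), G contains two vertices v_0, v_1 and the edge {v_0, v_1}, and M consists exactly of all these edges {v_0, v_1}; for each arc (u, v) ∈ E(H), G contains the edge {u_1, v_0}; finally, G contains two additional vertices w and r and the edges {w, s_0} and {t_1, w}. Then the blossoms of (G, M) containing the vertex w are in one-to-one correspondence with the directed simple paths from s to t in H. -/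
/-- A blossom of `(G, M)` through the vertex `w`, described by its edge set `C`:
there is a cycle through `w` of length `2k + 1`, exactly `k` of whose edges
belong to the matching `M`, whose edge set is `C`. -/
def IsBlossomThrough {W : Type*} (G : SimpleGraph W) (M : Set (Sym2 W)) (w : W)
    (C : Set (Sym2 W)) : Prop :=
  ∃ (c : G.Walk w w) (k : ℕ), c.IsCycle ∧ c.length = 2 * k + 1 ∧
    {e | e ∈ c.edges ∧ e ∈ M}.ncard = k ∧ C = {e | e ∈ c.edges}

/-- The undirected graph `G` built from a directed graph `(H, E)` with
distinguished vertices `src` and `tgt`: each `v ∈ H` yields two vertices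
`v₀ = Sum.inl (v, 0)` and `v₁ = Sum.inl (v, 1)` joined by an edge; each arc
`(u, v)` yields the edge `{u₁, v₀}`; and there are two extra vertices
`w = Sum.inr 0` and `r = Sum.inr 1`, with the edges `{w, src₀}` and
`{tgt₁, w}`. -/
def blossomGraph {H : Type*} (E : H → H → Prop) (src tgt : H) :
    SimpleGraph ((H × Fin 2) ⊕ Fin 2) :=
  SimpleGraph.fromEdgeSet
    ({e | ∃ v : H, e = s(Sum.inl (v, 0), Sum.inl (v, 1))} ∪
     {e | ∃ u v : H, E u v ∧ e = s(Sum.inl (u, 1), Sum.inl (v, 0))} ∪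
     {s(Sum.inr 0, Sum.inl (src, 0)), s(Sum.inl (tgt, 1), Sum.inr 0)})

/-- The matching `M` on `blossomGraph`: exactly the edges `{v₀, v₁}` for
`v ∈ H`. -/
def blossomMatching (H : Type*) : Set (Sym2 ((H × Fin 2) ⊕ Fin 2)) :=
  {e | ∃ v : H, e = s(Sum.inl (v, 0), Sum.inl (v, 1))}

/-!
Matched edges are pairwise disjoint and avoid `w`, so a trail ending at `w` has at most half of
its edges in `M`. A blossom through `w` is a cycle `w x₁ ⋯ x₂ₖ w` with `k` matched edges, so the
path `x₁ ⋯ x₂ₖ w` attains this bound, which forces it to alternate, starting with a matched edge.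
Oriented so that it leaves `w` through `src₀` (it enters and leaves `w` through its only two
neighbours `src₀` and `tgt₁`), the cycle therefore reads `w src₀ src₁ a₀ a₁ ⋯ tgt₀ tgt₁ w`, the lift
of a directed simple path `src a ⋯ tgt`; conversely every such path lifts to a blossom, and the
path is recovered from the edge set by following the unmatched edges out of the vertices `a₁`.
-/

theorem List.ncard_setOf_mem_and_eq_countP {α : Type*} {l : List α} (hl : l.Nodup)
    (p : α → Prop) [DecidablePred p] : {x | x ∈ l ∧ p x}.ncard = l.countP (p ·) := by
  classical
  rw [List.countP_eq_length_filter, ← List.toFinset_card_of_nodup (hl.filter _),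
    ← Set.ncard_coe_finset]
  congr 1
  ext x
  simp

namespace SimpleGraph.Walk

variable {V : Type*} {G : SimpleGraph V} {M : Set (Sym2 V)} [DecidablePred (· ∈ M)] {w : V}

-- The second conjunct is the induction hypothesis needed after a matched edge.
theorem IsTrail.two_mul_countP_mem_le_length_aux
    (hM : ∀ e ∈ M, ∀ f ∈ M, ∀ x ∈ e, x ∈ f → e = f) (hw : ∀ e ∈ M, w ∉ e)
    {u : V} {R : G.Walk u w} (hR : R.IsTrail) :
    2 * R.edges.countP (· ∈ M) ≤ R.length ∧
      ∀ e ∈ M, u ∈ e → e ∉ R.edges → 2 * R.edges.countP (· ∈ M) + 1 ≤ R.length := by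
  induction R with
  | nil => exact ⟨le_rfl, fun e he hwe _ => (hw e he hwe).elim⟩
  | @cons u x _ _ R ih =>
    rw [isTrail_cons] at hR
    obtain ⟨ih, ih'⟩ := ih hw hR.1
    simp only [edges_cons, List.countP_cons, length_cons, decide_eq_true_eq]
    refine ⟨?_, fun e he hue heR => ?_⟩
    · split_ifs with hux
      · have := ih' _ hux (Sym2.mem_mk_right u x) hR.2
        omega
      · omega
    · have hux : s(u, x) ∉ M := fun hux =>
        heR (List.mem_cons.2 (Or.inl (hM e he _ hux u hue (Sym2.mem_mk_left u x))))
      rw [if_neg hux]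
      omega

theorem IsTrail.two_mul_countP_mem_le_length
    (hM : ∀ e ∈ M, ∀ f ∈ M, ∀ x ∈ e, x ∈ f → e = f) (hw : ∀ e ∈ M, w ∉ e)
    {u : V} {R : G.Walk u w} (hR : R.IsTrail) :
    2 * R.edges.countP (· ∈ M) ≤ R.length :=
  (hR.two_mul_countP_mem_le_length_aux hM hw).1

end SimpleGraph.Walk

namespace BlossomGraph

open SimpleGraph

variable {H : Type*} {E : H → H → Prop} {src tgt : H}

/-- `inV a`, `outV a` and `hub` are the vertices `a₀`, `a₁` and `w` of the construction. -/
abbrev inV (a : H) : (H × Fin 2) ⊕ Fin 2 := Sum.inl (a, 0)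

abbrev outV (a : H) : (H × Fin 2) ⊕ Fin 2 := Sum.inl (a, 1)

abbrev hub : (H × Fin 2) ⊕ Fin 2 := Sum.inr 0

theorem adj_inV_outV (a : H) : (blossomGraph E src tgt).Adj (inV a) (outV a) := by
  simp [blossomGraph]

theorem adj_outV_inV {a b : H} (h : E a b) : (blossomGraph E src tgt).Adj (outV a) (inV b) := by
  simp [blossomGraph, h]

theorem adj_hub_inV_src : (blossomGraph E src tgt).Adj hub (inV src) := by
  simp [blossomGraph]

theorem adj_outV_tgt_hub : (blossomGraph E src tgt).Adj (outV tgt) hub := by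
  simp [blossomGraph]

theorem eq_of_adj_hub {x} (h : (blossomGraph E src tgt).Adj hub x) :
    x = inV src ∨ x = outV tgt := by
  simpa [blossomGraph] using h.1

theorem eq_of_adj_outV {a : H} {x} (h : (blossomGraph E src tgt).Adj (outV a) x) :
    (a = tgt ∧ x = hub) ∨ x = inV a ∨ ∃ b, E a b ∧ x = inV b := by
  simpa [blossomGraph] using h.1

theorem mk_mem_blossomMatching (a : H) : s(inV a, outV a) ∈ blossomMatching H := ⟨a, rfl⟩

theorem hub_notMem_of_mem_blossomMatching : ∀ e ∈ blossomMatching H, hub ∉ e := by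
  rintro e ⟨a, rfl⟩
  simp

@[simp]
theorem mk_hub_notMem_blossomMatching (x) : s(hub, x) ∉ blossomMatching H := fun h =>
  hub_notMem_of_mem_blossomMatching _ h (Sym2.mem_mk_left _ _)

theorem eq_of_mem_of_mem_blossomMatching :
    ∀ e ∈ blossomMatching H, ∀ f ∈ blossomMatching H, ∀ x ∈ e, x ∈ f → e = f := by
  rintro e ⟨a, rfl⟩ f ⟨b, rfl⟩ x hxe hxf
  simp only [Sym2.mem_iff] at hxe hxf
  rcases hxe with rfl | rfl <;> simp_all

theorem mk_outV_inV_mem_blossomMatching_iff {a b : H} :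
    s(outV a, inV b) ∈ blossomMatching H ↔ a = b := by
  simp [blossomMatching, eq_comm]

/-- The edges of `a₀ a₁ b₀ b₁ ⋯ z₁ w`, the lift of the directed path `a b ⋯ z` given as `a :: p`. -/
def liftEdges : H → List H → List (Sym2 ((H × Fin 2) ⊕ Fin 2))
  | a, [] => [s(inV a, outV a), s(outV a, hub)]
  | a, b :: p => s(inV a, outV a) :: s(outV a, inV b) :: liftEdges b p

theorem length_liftEdges (a : H) (p : List H) : (liftEdges a p).length = 2 * (p.length + 1) := by
  induction p generalizing a with
  | nil => rfl
  | cons b p ih => simp only [liftEdges, List.length_cons, ih]; ring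

theorem countP_liftEdges [DecidablePred (· ∈ blossomMatching H)] {a : H} {p : List H}
    (hp : (a :: p).Nodup) : (liftEdges a p).countP (· ∈ blossomMatching H) = p.length + 1 := by
  induction p generalizing a with
  | nil =>
    simp [liftEdges, mk_mem_blossomMatching, Sym2.eq_swap (a := outV a)]
  | cons b p ih =>
    have hab : a ≠ b := by simp_all
    simp [liftEdges, ih hp.of_cons, mk_mem_blossomMatching, mk_outV_inV_mem_blossomMatching_iff,
      hab]

theorem mem_of_outV_mem_of_mem_liftEdges {a b : H} {p : List H} {e}
    (he : e ∈ liftEdges a p) (hb : outV b ∈ e) : b ∈ a :: p := by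
  induction p generalizing a with
  | nil =>
    simp only [liftEdges, List.mem_cons, List.not_mem_nil, or_false] at he
    rcases he with rfl | rfl <;> simp_all
  | cons c p ih =>
    simp only [liftEdges, List.mem_cons] at he
    rcases he with rfl | rfl | he
    · simp_all
    · simp_all
    · exact List.mem_cons_of_mem _ (ih he)

theorem mk_hub_inV_notMem_liftEdges (a b : H) (p : List H) : s(hub, inV b) ∉ liftEdges a p := by
  induction p generalizing a with
  | nil => simp [liftEdges]
  | cons c p ih => simp [liftEdges, ih]

theorem map_sublist_liftEdges (a : H) (p : List H) :
    ((a :: p).map fun b => s(inV b, outV b)).Sublist (liftEdges a p) := by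
  induction p generalizing a with
  | nil => simp [liftEdges]
  | cons b p ih => exact ((ih b).cons _).cons_cons _

theorem nodup_of_nodup_liftEdges {a : H} {p : List H} (hp : (liftEdges a p).Nodup) :
    (a :: p).Nodup :=
  ((map_sublist_liftEdges a p).nodup hp).of_map _

variable (E src tgt) in
def liftWalk : (a : H) → (p : List H) → (a :: p).IsChain E → (a :: p).getLast? = some tgt →
    (blossomGraph E src tgt).Walk (inV a) hub
  | a, [], _, hl =>
    .cons (adj_inV_outV a) (.cons (by cases Option.some.inj hl; exact adj_outV_tgt_hub) .nil)
  | a, b :: p, hc, hl =>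
    .cons (adj_inV_outV a) (.cons (adj_outV_inV (List.isChain_cons_cons.1 hc).1)
      (liftWalk b p (List.isChain_cons_cons.1 hc).2 (by rwa [List.getLast?_cons_cons] at hl)))

theorem edges_liftWalk {a : H} {p : List H} (hc : (a :: p).IsChain E)
    (hl : (a :: p).getLast? = some tgt) :
    (liftWalk E src tgt a p hc hl).edges = liftEdges a p := by
  induction p generalizing a with
  | nil => rfl
  | cons b p ih => simp [liftWalk, liftEdges, ih]

theorem mem_support_liftWalk {a : H} {p : List H} (hc : (a :: p).IsChain E)
    (hl : (a :: p).getLast? = some tgt) {x} (hx : x ∈ (liftWalk E src tgt a p hc hl).support) :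
    x = hub ∨ ∃ b ∈ a :: p, x = inV b ∨ x = outV b := by
  induction p generalizing a with
  | nil =>
    simp only [liftWalk, Walk.support_cons, Walk.support_nil, List.mem_cons, List.not_mem_nil,
      or_false] at hx
    rcases hx with rfl | rfl | rfl <;> simp
  | cons b p ih =>
    simp only [liftWalk, Walk.support_cons, List.mem_cons] at hx
    rcases hx with rfl | rfl | hx
    · simp
    · simp
    · obtain h | ⟨c, hc, h⟩ := ih _ _ hx
      · exact Or.inl h
      · exact Or.inr ⟨c, List.mem_cons_of_mem _ hc, h⟩

theorem isPath_liftWalk {a : H} {p : List H} (hc : (a :: p).IsChain E)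
    (hl : (a :: p).getLast? = some tgt) (hp : (a :: p).Nodup) :
    (liftWalk E src tgt a p hc hl).IsPath := by
  induction p generalizing a with
  | nil => simp [liftWalk]
  | cons b p ih =>
    have ha : a ∉ b :: p := (List.nodup_cons.1 hp).1
    have hfresh : ∀ {hc' hl'}, ∀ x ∈ (liftWalk E src tgt b p hc' hl').support,
        x ≠ inV a ∧ x ≠ outV a := by
      intro _ _ x hx
      obtain rfl | ⟨c, hcp, rfl | rfl⟩ := mem_support_liftWalk _ _ hx
      · simp
      all_goals simp [ne_of_mem_of_not_mem hcp ha]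
    simp only [liftWalk, Walk.cons_isPath_iff, Walk.support_cons, List.mem_cons]
    refine ⟨⟨ih _ _ hp.of_cons, fun h => (hfresh _ h).2 rfl⟩, ?_⟩
    rintro (h | h)
    · simp at h
    · exact (hfresh _ h).1 rfl

theorem exists_liftEdges_of_isPath [DecidablePred (· ∈ blossomMatching H)] {a : H}
    {Q : (blossomGraph E src tgt).Walk (inV a) hub} (hQ : Q.IsPath)
    (hcount : 2 * Q.edges.countP (· ∈ blossomMatching H) = Q.length) :
    ∃ p, (a :: p).IsChain E ∧ (a :: p).getLast? = some tgt ∧ Q.edges = liftEdges a p := by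
  induction hn : Q.length using Nat.strong_induction_on generalizing a Q with
  | _ n ih =>
  subst hn
  cases Q with
  | cons h Q₁ =>
  rename_i b
  by_cases hm : s(inV a, b) ∈ blossomMatching H
  swap
  · -- an unmatched first edge leaves too many matched edges for the rest of the path
    have := hQ.of_cons.isTrail.two_mul_countP_mem_le_length eq_of_mem_of_mem_blossomMatching
      hub_notMem_of_mem_blossomMatching
    simp only [Walk.edges_cons, Walk.length_cons, List.countP_cons, decide_eq_true_eq, hm,
      if_false] at hcount
    omega
  obtain rfl : b = outV a := Sym2.congr_right.1 <|
    eq_of_mem_of_mem_blossomMatching _ hm _ (mk_mem_blossomMatching a) _ (Sym2.mem_mk_left _ _)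
      (Sym2.mem_mk_left _ _)
  cases Q₁ with
  | cons h₂ Q₂ =>
  rename_i c
  have hfresh : inV a ∉ Q₂.support := by
    simp only [Walk.cons_isPath_iff, Walk.support_cons, List.mem_cons] at hQ
    exact fun h => hQ.2 (Or.inr h)
  obtain ⟨rfl, rfl⟩ | rfl | ⟨d, hEd, rfl⟩ := eq_of_adj_outV h₂
  · obtain rfl := (Walk.isPath_iff_nil.1 hQ.of_cons.of_cons).eq_nil
    exact ⟨[], by simp, rfl, rfl⟩
  · exact (hfresh Q₂.start_mem_support).elim
  · have hda : a ≠ d := fun had => hfresh (had ▸ Q₂.start_mem_support)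
    have hQ₂ : 2 * Q₂.edges.countP (· ∈ blossomMatching H) = Q₂.length := by
      simp only [Walk.edges_cons, Walk.length_cons, List.countP_cons, decide_eq_true_eq, hm,
        mk_outV_inV_mem_blossomMatching_iff, hda, if_true, if_false] at hcount
      omega
    obtain ⟨p, hc, hl, hp⟩ := ih Q₂.length (by simp) hQ.of_cons.of_cons hQ₂ rfl
    exact ⟨d :: p, List.isChain_cons_cons.2 ⟨hEd, hc⟩, by rwa [List.getLast?_cons_cons],
      by simp [liftEdges, hp]⟩

theorem head?_eq_some_iff_mem_liftEdges {a x : H} {p : List H} (hp : (a :: p).Nodup) :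
    p.head? = some x ↔ x ≠ a ∧ s(outV a, inV x) ∈ liftEdges a p := by
  cases p with
  | nil => simp [liftEdges]
  | cons b p =>
    have hab : a ≠ b := by simp_all
    constructor
    · rintro ⟨⟩
      exact ⟨hab.symm, by simp [liftEdges]⟩
    · rintro ⟨hxa, hx⟩
      simp only [liftEdges, List.mem_cons] at hx
      obtain h | h | h := hx
      · simp [hxa] at h
      · simp_all
      · exact ((List.nodup_cons.1 hp).1 <|
          mem_of_outV_mem_of_mem_liftEdges h (Sym2.mem_mk_left _ _)).elim

theorem mem_liftEdges_cons_iff {a b : H} {r q : List H} (ha : a ∉ b :: r) {e}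
    (he : e ∈ liftEdges b r) : e ∈ liftEdges a (b :: q) ↔ e ∈ liftEdges b q := by
  have hae : outV a ∉ e := fun h => ha (mem_of_outV_mem_of_mem_liftEdges he h)
  have h₁ : e ≠ s(inV a, outV a) := fun h => hae (h ▸ Sym2.mem_mk_right _ _)
  have h₂ : e ≠ s(outV a, inV b) := fun h => hae (h ▸ Sym2.mem_mk_left _ _)
  simp [liftEdges, h₁, h₂]

theorem head?_eq_of_forall_mem_liftEdges_iff {a : H} {p q : List H} (hp : (a :: p).Nodup)
    (hq : (a :: q).Nodup) (h : ∀ e, e ∈ liftEdges a p ↔ e ∈ liftEdges a q) :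
    p.head? = q.head? :=
  Option.ext fun x => by
    rw [head?_eq_some_iff_mem_liftEdges hp, head?_eq_some_iff_mem_liftEdges hq, h]

theorem eq_of_forall_mem_liftEdges_iff {a : H} {p q : List H} (hp : (a :: p).Nodup)
    (hq : (a :: q).Nodup) (h : ∀ e, e ∈ liftEdges a p ↔ e ∈ liftEdges a q) : p = q := by
  have hhead := head?_eq_of_forall_mem_liftEdges_iff hp hq h
  induction p generalizing a q with
  | nil => cases q <;> simp_all
  | cons b r ih =>
    obtain ⟨r', rfl⟩ := List.head?_eq_some_iff.1 hhead.symm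
    have ha : a ∉ b :: r := (List.nodup_cons.1 hp).1
    have ha' : a ∉ b :: r' := (List.nodup_cons.1 hq).1
    have htail : ∀ e, e ∈ liftEdges b r ↔ e ∈ liftEdges b r' := fun e =>
      ⟨fun he => (mem_liftEdges_cons_iff ha he).1 ((h e).1 (by simp [liftEdges, he])),
        fun he => (mem_liftEdges_cons_iff ha' he).1 ((h e).2 (by simp [liftEdges, he]))⟩
    rw [ih hp.of_cons hq.of_cons htail
      (head?_eq_of_forall_mem_liftEdges_iff hp.of_cons hq.of_cons htail)]

def blossomEdges (src : H) (l : List H) : Set (Sym2 ((H × Fin 2) ⊕ Fin 2)) :=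
  {e | e ∈ s(hub, inV src) :: liftEdges src l.tail}

theorem isBlossomThrough_blossomEdges {l : List H} (hc : l.IsChain E)
    (hs : l.head? = some src) (ht : l.getLast? = some tgt) (hl : l.Nodup) :
    IsBlossomThrough (blossomGraph E src tgt) (blossomMatching H) hub (blossomEdges src l) := by
  classical
  obtain ⟨p, rfl⟩ := List.head?_eq_some_iff.1 hs
  have hcyc : (Walk.cons adj_hub_inV_src (liftWalk E src tgt src p hc ht)).IsCycle :=
    (Walk.cons_isCycle_iff _ _).2 ⟨isPath_liftWalk hc ht hl,
      by rw [edges_liftWalk]; exact mk_hub_inV_notMem_liftEdges _ _ _⟩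
  refine ⟨_, p.length + 1, hcyc, ?_, ?_, ?_⟩
  · rw [Walk.length_cons, ← Walk.length_edges, edges_liftWalk, length_liftEdges]
  · rw [List.ncard_setOf_mem_and_eq_countP hcyc.edges_nodup, Walk.edges_cons, edges_liftWalk,
      List.countP_cons, countP_liftEdges hl]
    simp
  · simp [blossomEdges, edges_liftWalk]

theorem exists_isCycle_snd_eq_inV_src {c : (blossomGraph E src tgt).Walk hub hub}
    (hc : c.IsCycle) :
    ∃ c' : (blossomGraph E src tgt).Walk hub hub,
      c'.IsCycle ∧ c'.snd = inV src ∧ c'.edges.Perm c.edges := by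
  by_cases hsnd : c.snd = inV src
  · exact ⟨c, hc, hsnd, .refl _⟩
  refine ⟨c.reverse, hc.reverse, ?_, by simp [List.reverse_perm]⟩
  rw [Walk.snd_reverse]
  have hsnd' : c.snd = outV tgt := (eq_of_adj_hub (c.adj_snd hc.not_nil)).resolve_left hsnd
  refine (eq_of_adj_hub (c.adj_penultimate hc.not_nil).symm).resolve_right fun h => ?_
  exact hc.snd_ne_penultimate (hsnd'.trans h.symm)

theorem exists_eq_blossomEdges_of_isBlossomThrough {C : Set (Sym2 ((H × Fin 2) ⊕ Fin 2))}
    (hC : IsBlossomThrough (blossomGraph E src tgt) (blossomMatching H) hub C) :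
    ∃ l : List H, (l.IsChain E ∧ l.head? = some src ∧ l.getLast? = some tgt ∧ l.Nodup) ∧
      C = blossomEdges src l := by
  classical
  obtain ⟨c₀, k, hc₀, hlen, hk, rfl⟩ := hC
  rw [List.ncard_setOf_mem_and_eq_countP hc₀.edges_nodup] at hk
  obtain ⟨c, hc, hsnd, hperm⟩ := exists_isCycle_snd_eq_inV_src hc₀
  cases c with
  | nil => exact (hc.ne_nil rfl).elim
  | cons h Q =>
  rw [Walk.snd_cons] at hsnd
  subst hsnd
  have hQ := ((Walk.cons_isCycle_iff _ _).1 hc).1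
  have hcount : 2 * Q.edges.countP (· ∈ blossomMatching H) = Q.length := by
    have hlen' := hperm.length_eq
    rw [← hperm.countP_eq] at hk
    simp only [Walk.edges_cons, List.countP_cons, decide_eq_true_eq,
      mk_hub_notMem_blossomMatching, if_false, List.length_cons, Walk.length_edges] at hk hlen'
    omega
  obtain ⟨p, hp, ht, hQp⟩ := exists_liftEdges_of_isPath hQ hcount
  refine ⟨src :: p, ⟨hp, rfl, ht, nodup_of_nodup_liftEdges (hQp ▸ hQ.isTrail.edges_nodup)⟩, ?_⟩
  ext e
  simp [blossomEdges, ← hQp, ← hperm.mem_iff]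

theorem eq_of_blossomEdges_eq {l l' : List H} (hs : l.head? = some src) (hl : l.Nodup)
    (hs' : l'.head? = some src) (hl' : l'.Nodup) (h : blossomEdges src l = blossomEdges src l') :
    l = l' := by
  obtain ⟨p, rfl⟩ := List.head?_eq_some_iff.1 hs
  obtain ⟨q, rfl⟩ := List.head?_eq_some_iff.1 hs'
  refine congrArg _ (eq_of_forall_mem_liftEdges_iff hl hl' fun e => ?_)
  by_cases he : e = s(hub, inV src)
  · simp [he, mk_hub_inV_notMem_liftEdges]
  · simpa [blossomEdges, he] using Set.ext_iff.1 h e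

end BlossomGraph

open BlossomGraph in
theorem blossoms_equiv_paths_general {H : Type*} (E : H → H → Prop)
    (src tgt : H) :
    Nonempty
      ({C : Set (Sym2 ((H × Fin 2) ⊕ Fin 2)) //
          IsBlossomThrough (blossomGraph E src tgt) (blossomMatching H)
            (Sum.inr 0) C} ≃
        {p : List H // p.Chain' E ∧ p.head? = some src ∧ p.getLast? = some tgt ∧
          p.Nodup}) := by
  refine ⟨(Equiv.ofBijective (fun l => ⟨blossomEdges src l.1,
    isBlossomThrough_blossomEdges l.2.1 l.2.2.1 l.2.2.2.1 l.2.2.2.2⟩) ⟨?_, ?_⟩).symm⟩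
  · rintro ⟨l, _, hs, _, hl⟩ ⟨l', _, hs', _, hl'⟩ h
    exact Subtype.ext (eq_of_blossomEdges_eq hs hl hs' hl' (congrArg Subtype.val h))
  · rintro ⟨C, hC⟩
    obtain ⟨l, hl, rfl⟩ := exists_eq_blossomEdges_of_isBlossomThrough hC
    exact ⟨⟨l, hl⟩, rfl⟩

/-- The blossoms of `(G, M)` containing the vertex `w` are in one-to-one
correspondence with the directed simple paths from `src` to `tgt` in the
directed graph `(H, E)` (a path being recorded as its list of vertices, with no
repetitions). -/
theorem blossoms_equiv_paths {H : Type*} [Fintype H] (E : H → H → Prop)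
    (src tgt : H) :
    Nonempty
      ({C : Set (Sym2 ((H × Fin 2) ⊕ Fin 2)) //
          IsBlossomThrough (blossomGraph E src tgt) (blossomMatching H)
            (Sum.inr 0) C} ≃
        {p : List H // p.Chain' E ∧ p.head? = some src ∧ p.getLast? = some tgt ∧
          p.Nodup}) :=
  blossoms_equiv_paths_general E src tgt
end
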